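/- arXiv:1203.4225 — 7 statements merged into one kernel-verified Lean document; each statement's English description precedes it below -/
import Mathlib

section
/- Let q : [a,b] → ℂ be continuous and f ∈ C²[a,b] a nonvanishing solution of f'' - q f = 0 with f(x) ≠ 0 on [a,b]. Define X^(0) ≡ 1, X^(n)(x) = n ∫_{x₀}^x X^(n-1)(s)(f²(s))^{(-1)ⁿ} ds, X̃^(0) ≡ 1, X̃^(n)(x) = n ∫_{x₀}^x X̃^(n-1)(s)(f²(s))^{(-1)^{n-1}} ds, and φ_k = f·X^(k) for k odd, φ_k = f·X̃^(k) for k even. Then for each λ ∈ ℂ the series u₁ = Σ_{k≥0} λ^k φ_{2k}/(2k)! converges uniformly on [a,b] and u₁ satisfies u₁'' - q u₁ = λ u₁ on (a,b). -/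
open MeasureTheory Filter Finset

/-!
Write `φ_{2k} = f X̃⁽²ᵏ⁾`. Differentiating the defining integrals twice, the weights `f²` and
`f⁻²` cancel against the factors of `f` and one finds the SPPS recursion
`φ_{2k}'' = q φ_{2k} + 2k (2k - 1) φ_{2k-2}`. Since `2k (2k - 1) / (2k)! = 1 / (2k - 2)!`,
summing the second terms against `λᵏ / (2k)!` gives `λ` times the series of `u₁` shifted by one
index, so `u₁'' = q u₁ + λ u₁` holds termwise. To justify the termwise differentiation, induction on the recursion gives
`‖X̃⁽ⁿ⁾(x)‖ ≤ (M |x - x₀|)ⁿ`, the factor `n` cancelling the `1 / n` from integrating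
`|s - x₀|ⁿ⁻¹`. Hence `φ_{2k}` and its first two derivatives are `O((2k + 1)² R²ᵏ)` uniformly
on `[a, b]`, and `λᵏ / (2k)!` times this is summable.
-/

theorem norm_intervalIntegral_le_of_norm_le_abs_sub_pow {E : Type*} [NormedAddCommGroup E]
    [NormedSpace ℝ E] {g : ℝ → E} {x₀ x K : ℝ} {n : ℕ}
    (hg : ∀ s ∈ Set.uIoc x₀ x, ‖g s‖ ≤ K * |s - x₀| ^ n) :
    ‖∫ s in x₀..x, g s‖ ≤ K * (|x - x₀| ^ (n + 1) / (n + 1)) := by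
  rw [intervalIntegral.norm_intervalIntegral_eq, ← integral_pow_abs_sub_uIoc,
    ← integral_const_mul]
  exact norm_integral_le_of_norm_le (Continuous.integrableOn_uIoc (by fun_prop))
    ((ae_restrict_mem measurableSet_uIoc).mono hg)

/-- With `w n = (f ^ 2) ^ (-1) ^ n` these are the paper's `X̃⁽ⁿ⁾`. -/
def IsFormalPowers (x₀ : ℝ) (w Y : ℕ → ℝ → ℂ) : Prop :=
  (∀ x, Y 0 x = 1) ∧ ∀ n x, Y (n + 1) x = (n + 1 : ℂ) * ∫ s in x₀..x, Y n s * w n s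

namespace IsFormalPowers

variable {a b x₀ : ℝ} {w Y : ℕ → ℝ → ℂ}

theorem eq_succ (hY : IsFormalPowers x₀ w Y) (n : ℕ) :
    Y (n + 1) = fun x => (n + 1 : ℂ) * ∫ s in x₀..x, Y n s * w n s :=
  funext (hY.2 n)

theorem continuousOn (hY : IsFormalPowers x₀ w Y) (hx₀ : x₀ ∈ Set.Icc a b)
    (hw : ∀ n, ContinuousOn (w n) (Set.Icc a b)) (n : ℕ) :
    ContinuousOn (Y n) (Set.Icc a b) := by
  induction n with
  | zero => simpa only [funext hY.1] using continuousOn_const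
  | succ n ih =>
    have hab : Set.uIcc a b = Set.Icc a b := Set.uIcc_of_le (hx₀.1.trans hx₀.2)
    have hprim := intervalIntegral.continuousOn_primitive_interval'
      ((ih.mul (hw n)).intervalIntegrable_of_Icc (μ := volume) (hx₀.1.trans hx₀.2))
      (hab ▸ hx₀)
    rw [hab] at hprim
    rw [hY.eq_succ]
    exact continuousOn_const.mul hprim

theorem norm_le (hY : IsFormalPowers x₀ w Y) (hx₀ : x₀ ∈ Set.Icc a b) {M : ℝ}
    (hwM : ∀ n, ∀ x ∈ Set.Icc a b, ‖w n x‖ ≤ M) (n : ℕ) :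
    ∀ x ∈ Set.Icc a b, ‖Y n x‖ ≤ (M * |x - x₀|) ^ n := by
  induction n with
  | zero => simp [hY.1]
  | succ n ih =>
    intro x hx
    have hint : ∀ s ∈ Set.uIoc x₀ x, ‖Y n s * w n s‖ ≤ M ^ (n + 1) * |s - x₀| ^ n := by
      intro s hs
      have hs' := Set.uIcc_subset_Icc hx₀ hx (Set.uIoc_subset_uIcc hs)
      rw [norm_mul, pow_succ, mul_right_comm, ← mul_pow]
      exact mul_le_mul (ih s hs') (hwM n s hs') (norm_nonneg _)
        ((norm_nonneg _).trans (ih s hs'))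
    rw [hY.2, norm_mul, show (n + 1 : ℂ) = ((n + 1 : ℕ) : ℂ) by push_cast; rfl,
      Complex.norm_natCast]
    calc ((n + 1 : ℕ) : ℝ) * ‖∫ s in x₀..x, Y n s * w n s‖
        ≤ (n + 1 : ℕ) * (M ^ (n + 1) * (|x - x₀| ^ (n + 1) / (n + 1))) := by
          gcongr
          exact norm_intervalIntegral_le_of_norm_le_abs_sub_pow hint
      _ = (M * |x - x₀|) ^ (n + 1) := by push_cast; field_simp; ring

theorem norm_le_pow (hY : IsFormalPowers x₀ w Y) (hx₀ : x₀ ∈ Set.Icc a b) {M R : ℝ}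
    (hwM : ∀ n, ∀ x ∈ Set.Icc a b, ‖w n x‖ ≤ M) (hR : M * (b - a) ≤ R) (n : ℕ) :
    ∀ x ∈ Set.Icc a b, ‖Y n x‖ ≤ R ^ n := by
  intro x hx
  have hM : 0 ≤ M := (norm_nonneg _).trans (hwM 0 x₀ hx₀)
  have hdist : |x - x₀| ≤ b - a :=
    abs_sub_le_iff.2 ⟨by linarith [hx.2, hx₀.1], by linarith [hx.1, hx₀.2]⟩
  exact (hY.norm_le hx₀ hwM n x hx).trans
    (pow_le_pow_left₀ (by positivity) ((mul_le_mul_of_nonneg_left hdist hM).trans hR) n)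

theorem hasDerivAt (hY : IsFormalPowers x₀ w Y) (hx₀ : x₀ ∈ Set.Icc a b)
    (hw : ∀ n, ContinuousOn (w n) (Set.Icc a b)) (n : ℕ) {x : ℝ} (hx : x ∈ Set.Ioo a b) :
    HasDerivAt (Y (n + 1)) ((n + 1) * (Y n x * w n x)) x := by
  have hc : ContinuousOn (fun s => Y n s * w n s) (Set.Icc a b) :=
    (hY.continuousOn hx₀ hw n).mul (hw n)
  rw [hY.eq_succ]
  refine (intervalIntegral.integral_hasDerivAt_right ?_ ?_ ?_).const_mul _
  · exact (hc.mono (Set.uIcc_subset_Icc hx₀ (Set.Ioo_subset_Icc_self hx))).intervalIntegrable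
  · exact (hc.mono Set.Ioo_subset_Icc_self).stronglyMeasurableAtFilter isOpen_Ioo x hx
  · exact hc.continuousAt (Icc_mem_nhds hx.1 hx.2)

end IsFormalPowers

theorem ContinuousOn.sq_zpow {f : ℝ → ℂ} {s : Set ℝ} (hf : ContinuousOn f s)
    (hf0 : ∀ x ∈ s, f x ≠ 0) (m : ℤ) : ContinuousOn (fun x => (f x ^ 2) ^ m) s :=
  (hf.pow 2).zpow₀ m fun x hx => Or.inl (pow_ne_zero 2 (hf0 x hx))

theorem norm_sq_zpow_neg_one_pow_le {z : ℂ} {K : ℝ} (hz : ‖z‖ ≤ K) (hz' : ‖z⁻¹‖ ≤ K)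
    (n : ℕ) :
    ‖(z ^ 2) ^ ((-1 : ℤ) ^ n)‖ ≤ K ^ 2 := by
  rcases neg_one_pow_eq_or ℤ n with h | h
  · rw [h, zpow_one, norm_pow]
    exact pow_le_pow_left₀ (norm_nonneg _) hz 2
  · rw [h, zpow_neg_one, ← inv_pow, norm_pow]
    exact pow_le_pow_left₀ (norm_nonneg _) hz' 2

section EvenSolution

variable {f f' : ℝ → ℂ} {Y : ℕ → ℝ → ℂ} {x : ℝ}

/- For `k = 0` the index `2 * k - 1` truncates to `0`; the term it appears in carries the
factor `2 * k = 0`. -/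

theorem hasDerivAt_mul_formalPower_even (hf : HasDerivAt f (f' x) x) (hfx : f x ≠ 0)
    (hY0 : ∀ y, Y 0 y = 1)
    (hY : ∀ n, HasDerivAt (Y (n + 1)) ((n + 1) * (Y n x * (f x ^ 2) ^ ((-1 : ℤ) ^ n))) x)
    (k : ℕ) :
    HasDerivAt (fun y => f y * Y (2 * k) y)
      (f' x * Y (2 * k) x + 2 * k * (Y (2 * k - 1) x / f x)) x := by
  cases k with
  | zero => simpa [hY0] using hf
  | succ j =>
    rw [show 2 * (j + 1) = 2 * j + 1 + 1 by ring, Nat.add_sub_cancel]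
    refine (hf.mul (hY (2 * j + 1))).congr_deriv ?_
    rw [Odd.neg_one_pow ⟨j, rfl⟩, zpow_neg_one]
    push_cast
    field_simp
    ring

theorem hasDerivAt_deriv_mul_formalPower_even {q : ℝ → ℂ} (hf : HasDerivAt f (f' x) x)
    (hf' : HasDerivAt f' (q x * f x) x) (hfx : f x ≠ 0) (hY0 : ∀ y, Y 0 y = 1)
    (hY : ∀ n, HasDerivAt (Y (n + 1)) ((n + 1) * (Y n x * (f x ^ 2) ^ ((-1 : ℤ) ^ n))) x)
    (k : ℕ) :
    HasDerivAt (fun y => f' y * Y (2 * k) y + 2 * k * (Y (2 * k - 1) y / f y))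
      (q x * (f x * Y (2 * k) x) + 2 * k * (2 * k - 1) * (f x * Y (2 * (k - 1)) x)) x := by
  cases k with
  | zero => simpa [hY0] using hf'
  | succ j =>
    rw [show 2 * (j + 1) = 2 * j + 1 + 1 by ring, Nat.add_sub_cancel, Nat.add_sub_cancel]
    refine (hf'.mul (hY (2 * j + 1))).add (((hY (2 * j)).div hf hfx).const_mul _)
      |>.congr_deriv ?_
    rw [Odd.neg_one_pow ⟨j, rfl⟩, Even.neg_one_pow ⟨j, by ring⟩, zpow_neg_one, zpow_one]
    push_cast
    field_simp
    ring

end EvenSolution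

section EvenTermBounds

variable {z z' w : ℂ} {K R : ℝ} {Y : ℕ → ℂ}

theorem norm_mul_formalPower_even_le (hz : ‖z‖ ≤ K) (hR : 1 ≤ R) (hY : ∀ n, ‖Y n‖ ≤ R ^ n)
    (k : ℕ) :
    ‖z * Y (2 * k)‖ ≤ (K + 1) ^ 2 * ((2 * k + 1) ^ 2 * R ^ (2 * k)) := by
  have hK : 0 ≤ K := (norm_nonneg _).trans hz
  calc ‖z * Y (2 * k)‖ ≤ K * R ^ (2 * k) := by
        rw [norm_mul]; exact mul_le_mul hz (hY _) (norm_nonneg _) hK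
    _ ≤ (K + 1) ^ 2 * (2 * k + 1) ^ 2 * R ^ (2 * k) := by
        gcongr
        nlinarith [mul_nonneg (sq_nonneg (K + 1)) (by positivity : (0 : ℝ) ≤ 4 * k ^ 2 + 4 * k)]
    _ = _ := by ring

theorem norm_deriv_mul_formalPower_even_le (hz' : ‖z'‖ ≤ K) (hzi : ‖z⁻¹‖ ≤ K) (hR : 1 ≤ R)
    (hY : ∀ n, ‖Y n‖ ≤ R ^ n) (k : ℕ) :
    ‖z' * Y (2 * k) + 2 * k * (Y (2 * k - 1) / z)‖
      ≤ (K + 1) ^ 2 * ((2 * k + 1) ^ 2 * R ^ (2 * k)) := by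
  have hK : 0 ≤ K := (norm_nonneg _).trans hz'
  have hY' : ‖Y (2 * k - 1)‖ ≤ R ^ (2 * k) := (hY _).trans (pow_le_pow_right₀ hR (by omega))
  calc ‖z' * Y (2 * k) + 2 * k * (Y (2 * k - 1) / z)‖
      ≤ ‖z'‖ * ‖Y (2 * k)‖ + 2 * k * (‖Y (2 * k - 1)‖ * ‖z⁻¹‖) := by
        refine (norm_add_le _ _).trans_eq ?_
        simp [div_eq_mul_inv]
    _ ≤ K * R ^ (2 * k) + 2 * k * (R ^ (2 * k) * K) := by gcongr; exact hY _
    _ = ((2 * k + 1) * K) * R ^ (2 * k) := by ring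
    _ ≤ (K + 1) ^ 2 * (2 * k + 1) ^ 2 * R ^ (2 * k) := by
        refine mul_le_mul_of_nonneg_right ?_ (by positivity)
        nlinarith [mul_nonneg (mul_nonneg hK hK) (by positivity : (0 : ℝ) ≤ k),
          mul_nonneg hK (by positivity : (0 : ℝ) ≤ k),
          mul_nonneg (mul_nonneg hK hK) (by positivity : (0 : ℝ) ≤ k * k)]
    _ = _ := by ring

theorem norm_deriv_deriv_mul_formalPower_even_le (hz : ‖z‖ ≤ K) (hw : ‖w‖ ≤ K) (hR : 1 ≤ R)
    (hY : ∀ n, ‖Y n‖ ≤ R ^ n) (k : ℕ) :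
    ‖w * (z * Y (2 * k)) + 2 * k * (2 * k - 1) * (z * Y (2 * (k - 1)))‖
      ≤ (K + 1) ^ 2 * ((2 * k + 1) ^ 2 * R ^ (2 * k)) := by
  have hK : 0 ≤ K := (norm_nonneg _).trans hz
  have hY' : ‖Y (2 * (k - 1))‖ ≤ R ^ (2 * k) := (hY _).trans (pow_le_pow_right₀ hR (by omega))
  have hk : ‖(2 * k - 1 : ℂ)‖ ≤ 2 * k + 1 := (norm_sub_le _ _).trans (by simp)
  calc ‖w * (z * Y (2 * k)) + 2 * k * (2 * k - 1) * (z * Y (2 * (k - 1)))‖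
      ≤ ‖w‖ * (‖z‖ * ‖Y (2 * k)‖)
          + 2 * k * ‖(2 * k - 1 : ℂ)‖ * (‖z‖ * ‖Y (2 * (k - 1))‖) := by
        refine (norm_add_le _ _).trans_eq ?_
        simp
    _ ≤ K * (K * R ^ (2 * k)) + 2 * k * (2 * k + 1) * (K * R ^ (2 * k)) := by
        gcongr; exact hY _
    _ = (K * K + 2 * k * (2 * k + 1) * K) * R ^ (2 * k) := by ring
    _ ≤ (K + 1) ^ 2 * (2 * k + 1) ^ 2 * R ^ (2 * k) := by
        gcongr
        nlinarith [(by positivity : (0 : ℝ) ≤ k), mul_nonneg hK (by positivity : (0 : ℝ) ≤ k)]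
    _ = _ := by ring

end EvenTermBounds

theorem exists_bound_mul_formalPower_even {a b x₀ : ℝ} (hx₀ : x₀ ∈ Set.Icc a b)
    {q f f' : ℝ → ℂ} (hq : ContinuousOn q (Set.Icc a b)) (hf : ContinuousOn f (Set.Icc a b))
    (hf' : ContinuousOn f' (Set.Icc a b)) (hf0 : ∀ x ∈ Set.Icc a b, f x ≠ 0)
    {Y : ℕ → ℝ → ℂ} (hY : IsFormalPowers x₀ (fun n s => (f s ^ 2) ^ ((-1 : ℤ) ^ n)) Y) :
    ∃ C R : ℝ, ∀ x ∈ Set.Icc a b, ∀ k : ℕ,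
      ‖f x * Y (2 * k) x‖ ≤ C * ((2 * k + 1) ^ 2 * R ^ (2 * k)) ∧
      ‖f' x * Y (2 * k) x + 2 * k * (Y (2 * k - 1) x / f x)‖
        ≤ C * ((2 * k + 1) ^ 2 * R ^ (2 * k)) ∧
      ‖q x * (f x * Y (2 * k) x) + 2 * k * (2 * k - 1) * (f x * Y (2 * (k - 1)) x)‖
        ≤ C * ((2 * k + 1) ^ 2 * R ^ (2 * k)) := by
  obtain ⟨K, hK⟩ : ∃ K, ∀ x ∈ Set.Icc a b,
      ‖f x‖ ≤ K ∧ ‖f' x‖ ≤ K ∧ ‖q x‖ ≤ K ∧ ‖(f x)⁻¹‖ ≤ K := by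
    obtain ⟨K, hK⟩ := isCompact_Icc.exists_bound_of_continuousOn
      (hf.prodMk <| hf'.prodMk <| hq.prodMk <| hf.inv₀ hf0)
    exact ⟨K, fun x hx => by simpa [Prod.norm_def] using hK x hx⟩
  set R := max 1 (K ^ 2 * (b - a))
  have hR : 1 ≤ R := le_max_left _ _
  have hYR : ∀ n, ∀ x ∈ Set.Icc a b, ‖Y n x‖ ≤ R ^ n :=
    hY.norm_le_pow hx₀
      (fun n y hy => norm_sq_zpow_neg_one_pow_le (hK y hy).1 (hK y hy).2.2.2 n)
      (le_max_right _ _)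
  refine ⟨(K + 1) ^ 2, R, fun x hx k => ?_⟩
  obtain ⟨hfK, hf'K, hqK, hf0K⟩ := hK x hx
  exact ⟨norm_mul_formalPower_even_le hfK hR (hYR · x hx) k,
    norm_deriv_mul_formalPower_even_le hf'K hf0K hR (hYR · x hx) k,
    norm_deriv_deriv_mul_formalPower_even_le hfK hqK hR (hYR · x hx) k⟩

theorem summable_sq_mul_pow_div_factorial (r : ℝ) :
    Summable fun k : ℕ => (2 * k + 1 : ℝ) ^ 2 * r ^ (2 * k) / (2 * k).factorial := by
  have hle (n : ℕ) : ‖(n + 1 : ℝ) ^ 2 * r ^ n / n.factorial‖ ≤ (4 * |r|) ^ n / n.factorial := by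
    have h2 : (n + 1 : ℝ) ≤ 2 ^ n := by exact_mod_cast Nat.lt_two_pow_self
    rw [norm_div, norm_mul, norm_pow, Real.norm_eq_abs, Real.norm_eq_abs, Real.norm_natCast,
      abs_of_nonneg (by positivity), abs_pow, mul_pow,
      show (4 : ℝ) ^ n = (2 ^ n) ^ 2 by rw [← pow_mul, mul_comm, pow_mul]; norm_num]
    gcongr
  have hsum := (Summable.of_norm_bounded (Real.summable_pow_div_factorial (4 * |r|))
    hle).comp_injective (mul_right_injective₀ (two_ne_zero' ℕ))
  exact hsum.congr fun k => by simp

theorem norm_pow_div_factorial_mul_le (lam v : ℂ) {C R : ℝ} {k : ℕ}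
    (hv : ‖v‖ ≤ C * ((2 * k + 1) ^ 2 * R ^ (2 * k))) :
    ‖lam ^ k / (2 * k).factorial * v‖
      ≤ C * ((2 * k + 1) ^ 2 * (√‖lam‖ * R) ^ (2 * k) / (2 * k).factorial) := by
  rw [norm_mul, norm_div, norm_pow, Complex.norm_natCast, mul_pow, pow_mul √‖lam‖,
    Real.sq_sqrt (norm_nonneg lam)]
  calc ‖lam‖ ^ k / (2 * k).factorial * ‖v‖
      ≤ ‖lam‖ ^ k / (2 * k).factorial * (C * ((2 * k + 1) ^ 2 * R ^ (2 * k))) := by gcongr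
    _ = _ := by ring

theorem hasSum_shift_two_mul_factorial {lam s : ℂ} {g : ℕ → ℂ}
    (hg : HasSum (fun k => lam ^ k / (2 * k).factorial * g k) s) :
    HasSum (fun k => lam ^ k / (2 * k).factorial * (2 * k * (2 * k - 1) * g (k - 1)))
      (lam * s) := by
  rw [← hasSum_nat_add_iff' 1]
  simp only [range_one, sum_singleton, CharP.cast_eq_zero, mul_zero, zero_mul, sub_zero,
    add_tsub_cancel_right]
  refine (hg.mul_left lam).congr_fun fun k => ?_
  rw [show 2 * (k + 1) = 2 * k + 1 + 1 by ring, Nat.factorial_succ, Nat.factorial_succ]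
  have h₁ : (2 * k + 1 + 1 : ℂ) ≠ 0 := by norm_cast
  have h₂ : (2 * k + 1 : ℂ) ≠ 0 := by norm_cast
  push_cast
  field_simp
  ring

theorem deriv_deriv_tsum_eq {t : Set ℝ} (ht : IsOpen t) (h't : IsPreconnected t)
    {F F₁ F₂ : ℕ → ℝ → ℂ} {m : ℕ → ℝ} (hm : Summable m)
    (hF : ∀ k y, y ∈ t → HasDerivAt (F k) (F₁ k y) y)
    (hF₁ : ∀ k y, y ∈ t → HasDerivAt (F₁ k) (F₂ k y) y)
    (hFm : ∀ k y, y ∈ t → ‖F k y‖ ≤ m k) (hF₁m : ∀ k y, y ∈ t → ‖F₁ k y‖ ≤ m k)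
    (hF₂m : ∀ k y, y ∈ t → ‖F₂ k y‖ ≤ m k) {x : ℝ} (hx : x ∈ t) :
    deriv (deriv fun y => ∑' k, F k y) x = ∑' k, F₂ k x := by
  have h₁ : deriv (fun y => ∑' k, F k y) =ᶠ[nhds x] fun y => ∑' k, F₁ k y := by
    filter_upwards [ht.mem_nhds hx] with y hy
    exact (hasDerivAt_tsum_of_isPreconnected hm ht h't hF hF₁m hy
      (.of_norm_bounded hm (hFm · y hy)) hy).deriv
  rw [h₁.deriv_eq]
  exact (hasDerivAt_tsum_of_isPreconnected hm ht h't hF₁ hF₂m hx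
    (.of_norm_bounded hm (hF₁m · x hx)) hx).deriv

theorem stmt3_general
    (a b x₀ : ℝ) (hx₀ : x₀ ∈ Set.Icc a b)
    (q f f' f'' : ℝ → ℂ)
    (hq : ContinuousOn q (Set.Icc a b))
    (hf1 : ∀ x ∈ Set.Icc a b, HasDerivAt f (f' x) x)
    (hf2 : ∀ x ∈ Set.Icc a b, HasDerivAt f' (f'' x) x)
    (hode : ∀ x ∈ Set.Icc a b, f'' x = q x * f x)
    (hfne : ∀ x ∈ Set.Icc a b, f x ≠ 0)
    (X Xt : ℕ → ℝ → ℂ)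
    (hXt0 : ∀ x, Xt 0 x = 1)
    (hXtrec : ∀ n x, Xt (n + 1) x
      = (n + 1 : ℂ) * ∫ s in x₀..x, Xt n s * ((f s) ^ 2) ^ ((-1 : ℤ) ^ n))
    (φ : ℕ → ℝ → ℂ)
    (hφ : ∀ k x, φ k x = if Odd k then f x * X k x else f x * Xt k x)
    (lam : ℂ)
    (u₁ : ℝ → ℂ)
    (hu₁ : ∀ x, u₁ x = ∑' k : ℕ, lam ^ k / ((2 * k).factorial : ℂ) * φ (2 * k) x) :
    TendstoUniformlyOn
      (fun N x => ∑ k ∈ range N, lam ^ k / ((2 * k).factorial : ℂ) * φ (2 * k) x)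
      u₁ atTop (Set.Icc a b)
    ∧ ∀ x ∈ Set.Ioo a b, deriv (deriv u₁) x - q x * u₁ x = lam * u₁ x := by
  have hI : Set.Ioo a b ⊆ Set.Icc a b := Set.Ioo_subset_Icc_self
  have hfc : ContinuousOn f (Set.Icc a b) := HasDerivAt.continuousOn hf1
  have hXt : IsFormalPowers x₀ (fun n s => (f s ^ 2) ^ ((-1 : ℤ) ^ n)) Xt := ⟨hXt0, hXtrec⟩
  obtain ⟨C, R, hCR⟩ :=
    exists_bound_mul_formalPower_even hx₀ hq hfc (HasDerivAt.continuousOn hf2) hfne hXt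
  have hφ' (k : ℕ) (x : ℝ) : φ (2 * k) x = f x * Xt (2 * k) x := by
    simp [hφ, Nat.not_odd_iff_even.2 (even_two_mul k)]
  simp only [hφ'] at hu₁ ⊢
  obtain rfl : u₁ = _ := funext hu₁
  set m := fun k : ℕ => C * ((2 * k + 1) ^ 2 * (√‖lam‖ * R) ^ (2 * k) / (2 * k).factorial)
  have hm : Summable m := (summable_sq_mul_pow_div_factorial _).mul_left C
  have hb₀ := fun k x hx => norm_pow_div_factorial_mul_le lam _ (hCR x hx k).1
  refine ⟨tendstoUniformlyOn_tsum_nat hm hb₀, fun x hx => ?_⟩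
  have hXtd (y : ℝ) (hy : y ∈ Set.Ioo a b) (n : ℕ) :=
    hXt.hasDerivAt hx₀ (fun n => hfc.sq_zpow hfne _) n hy
  rw [deriv_deriv_tsum_eq isOpen_Ioo isPreconnected_Ioo hm
    (fun k y hy => (hasDerivAt_mul_formalPower_even (hf1 y (hI hy)) (hfne y (hI hy)) hXt0
      (hXtd y hy) k).const_mul _)
    (fun k y hy => (hasDerivAt_deriv_mul_formalPower_even (hf1 y (hI hy))
      (hode y (hI hy) ▸ hf2 y (hI hy)) (hfne y (hI hy)) hXt0 (hXtd y hy) k).const_mul _)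
    (fun k y hy => hb₀ k y (hI hy))
    (fun k y hy => norm_pow_div_factorial_mul_le lam _ (hCR y (hI hy) k).2.1)
    (fun k y hy => norm_pow_div_factorial_mul_le lam _ (hCR y (hI hy) k).2.2) hx]
  have hs := (Summable.of_norm_bounded hm (hb₀ · x (hI hx))).hasSum
  rw [(((hs.mul_left (q x)).add (hasSum_shift_two_mul_factorial hs)).congr_fun
    fun k => by ring).tsum_eq]
  ring

/-- SPPS: the series `u₁ = Σ λᵏ φ_{2k}/(2k)!` converges uniformly on `[a,b]`
and satisfies `u₁'' - q u₁ = λ u₁` on `(a,b)`. -/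
theorem stmt3
    (a b x₀ : ℝ) (hab : a < b) (hx₀ : x₀ ∈ Set.Icc a b)
    (q f f' f'' : ℝ → ℂ)
    (hq : ContinuousOn q (Set.Icc a b))
    (hf1 : ∀ x ∈ Set.Icc a b, HasDerivAt f (f' x) x)
    (hf2 : ∀ x ∈ Set.Icc a b, HasDerivAt f' (f'' x) x)
    (hode : ∀ x ∈ Set.Icc a b, f'' x = q x * f x)
    (hfne : ∀ x ∈ Set.Icc a b, f x ≠ 0)
    (X Xt : ℕ → ℝ → ℂ)
    (hX0 : ∀ x, X 0 x = 1) (hXt0 : ∀ x, Xt 0 x = 1)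
    (hXrec : ∀ n x, X (n + 1) x
      = (n + 1 : ℂ) * ∫ s in x₀..x, X n s * ((f s) ^ 2) ^ ((-1 : ℤ) ^ (n + 1)))
    (hXtrec : ∀ n x, Xt (n + 1) x
      = (n + 1 : ℂ) * ∫ s in x₀..x, Xt n s * ((f s) ^ 2) ^ ((-1 : ℤ) ^ n))
    (φ : ℕ → ℝ → ℂ)
    (hφ : ∀ k x, φ k x = if Odd k then f x * X k x else f x * Xt k x)
    (lam : ℂ)
    (u₁ : ℝ → ℂ)
    (hu₁ : ∀ x, u₁ x = ∑' k : ℕ, lam ^ k / ((2 * k).factorial : ℂ) * φ (2 * k) x) :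
    TendstoUniformlyOn
      (fun N x => ∑ k ∈ range N, lam ^ k / ((2 * k).factorial : ℂ) * φ (2 * k) x)
      u₁ atTop (Set.Icc a b)
    ∧ ∀ x ∈ Set.Ioo a b, deriv (deriv u₁) x - q x * u₁ x = lam * u₁ x :=
  stmt3_general a b x₀ hx₀ q f f' f'' hq hf1 hf2 hode hfne X Xt hXt0 hXtrec φ hφ lam u₁ hu₁
end

section
/- Under the SPPS setup, the series u₂ = Σ_{k≥0} λ^k φ_{2k+1}/(2k+1)! converges uniformly on [a,b] and satisfies u₂'' - q u₂ = λ u₂ on (a,b), with initial conditions u₂(x₀) = 0 and u₂'(x₀) = 1/f(x₀). -/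
/-!
With `Y n := X n / n!` the recursion becomes `Y (n + 1) x = ∫_{x₀}^x Y n * w n`, where the weight
`w n` is `f⁻²` for even `n` and `f²` for odd `n`; hence `‖Y n‖ ≤ ρⁿ / n!` on `[a, b]`. The series
`V = Σ λᵏ Y (2k+1)` and `W = Σ λᵏ Y (2k)` therefore converge uniformly and solve the integral
system `V = ∫_{x₀} W / f²`, `W = 1 + λ ∫_{x₀} f² V`, so `V' = W / f²`, `W' = λ f² V`, `V x₀ = 0`
and `W x₀ = 1`. As `u₂ = f V`, this gives `u₂' = f' V + W / f` and, by `f'' = q f`,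
`u₂'' = (q + λ) u₂`: this is the Pólya factorization `u'' - q u = f⁻¹ (f² (u / f)')'`.
-/

open MeasureTheory Filter Finset

-- `open scoped Nat` stays local: in the main theorem it would make `φ` parse as `Nat.totient`.
section

open scoped Nat

theorem hasDerivWithinAt_integral_Icc {E : Type*} [NormedAddCommGroup E] [NormedSpace ℝ E]
    [CompleteSpace E] {a b x₀ x : ℝ} {g : ℝ → E} (hx₀ : x₀ ∈ Set.Icc a b)
    (hx : x ∈ Set.Icc a b) (hg : ContinuousOn g (Set.Icc a b)) :
    HasDerivWithinAt (fun y => ∫ s in x₀..y, g s) (g x) (Set.Icc a b) x := by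
  have : Fact (x ∈ Set.Icc a b) := ⟨hx⟩
  exact intervalIntegral.integral_hasDerivWithinAt_right
    ((hg.mono (Set.uIcc_subset_Icc hx₀ hx)).intervalIntegrable)
    ⟨Set.Icc a b, self_mem_nhdsWithin, hg.aestronglyMeasurable measurableSet_Icc⟩ (hg x hx)

theorem hasSum_intervalIntegral_of_norm_le {E : Type*} [NormedAddCommGroup E]
    [NormedSpace ℝ E] [CompleteSpace E] {x y : ℝ} {F : ℕ → ℝ → E} {u : ℕ → ℝ}
    (hF : ∀ k, ContinuousOn (F k) (Set.uIcc x y)) (hu : Summable u)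
    (hFu : ∀ k, ∀ s ∈ Set.uIcc x y, ‖F k s‖ ≤ u k) :
    HasSum (fun k => ∫ s in x..y, F k s) (∫ s in x..y, ∑' k, F k s) := by
  refine intervalIntegral.hasSum_integral_of_dominated_convergence (fun k _ => u k)
    (fun k => ((hF k).aestronglyMeasurable measurableSet_uIcc).mono_set Set.uIoc_subset_uIcc)
    (fun k => ae_of_all _ fun s hs => hFu k s (Set.uIoc_subset_uIcc hs))
    (ae_of_all _ fun _ _ => hu) intervalIntegrable_const (ae_of_all _ fun s hs => ?_)
  exact (hu.of_norm_bounded fun k => hFu k s (Set.uIoc_subset_uIcc hs)).hasSum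

theorem tendstoUniformlyOn_sum_mul_tsum {β 𝕜 : Type*} [NormedField 𝕜] [CompleteSpace 𝕜]
    {s : Set β} {f : β → 𝕜} {F : ℕ → β → 𝕜} {u : ℕ → ℝ} {M : ℝ} (hu : Summable u)
    (hFu : ∀ k, ∀ x ∈ s, ‖F k x‖ ≤ u k) (hf : ∀ x ∈ s, ‖f x‖ ≤ M) :
    TendstoUniformlyOn (fun N x => ∑ k ∈ range N, f x * F k x) (fun x => f x * ∑' k, F k x)
      atTop s := by
  simp only [← tsum_mul_left]
  refine tendstoUniformlyOn_tsum_nat (hu.mul_left M) fun k x hx => ?_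
  rw [norm_mul]
  exact mul_le_mul (hf x hx) (hFu k x hx) (norm_nonneg _) ((norm_nonneg _).trans (hf x hx))

theorem deriv_deriv_eq_of_hasDerivWithinAt_Icc {E : Type*} [NormedAddCommGroup E]
    [NormedSpace ℝ E] {a b x : ℝ} {u u' : ℝ → E} {u'' : E}
    (hu : ∀ y ∈ Set.Icc a b, HasDerivWithinAt u (u' y) (Set.Icc a b) y)
    (hu' : HasDerivWithinAt u' u'' (Set.Icc a b) x) (hx : x ∈ Set.Ioo a b) :
    deriv (deriv u) x = u'' := by
  have hderiv : deriv u =ᶠ[nhds x] u' := by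
    filter_upwards [Ioo_mem_nhds hx.1 hx.2] with y hy
    exact ((hu y (Set.Ioo_subset_Icc_self hy)).hasDerivAt (Icc_mem_nhds hy.1 hy.2)).deriv
  rw [hderiv.deriv_eq, (hu'.hasDerivAt (Icc_mem_nhds hx.1 hx.2)).deriv]

theorem continuousOn_and_norm_le_of_integral_iterate {a b x₀ C : ℝ} {w Y : ℕ → ℝ → ℂ}
    (hx₀ : x₀ ∈ Set.Icc a b) (hw : ∀ n, ContinuousOn (w n) (Set.Icc a b))
    (hC : ∀ n, ∀ s ∈ Set.Icc a b, ‖w n s‖ ≤ C) (hY0 : ∀ x, Y 0 x = 1)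
    (hY : ∀ n x, Y (n + 1) x = ∫ s in x₀..x, Y n s * w n s) (n : ℕ) :
    ContinuousOn (Y n) (Set.Icc a b) ∧
      ∀ x ∈ Set.Icc a b, ‖Y n x‖ ≤ C ^ n * |x - x₀| ^ n / n ! := by
  have hC0 : 0 ≤ C := (norm_nonneg _).trans (hC 0 x₀ hx₀)
  induction n with
  | zero => exact ⟨continuousOn_const.congr fun x _ => hY0 x, fun x _ => by simp [hY0]⟩
  | succ n ih =>
    obtain ⟨hYc, hYb⟩ := ih
    refine ⟨fun x hx => ?_, fun x hx => ?_⟩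
    · exact (hasDerivWithinAt_integral_Icc hx₀ hx (hYc.mul (hw n))).continuousWithinAt.congr
        (fun y _ => hY n y) (hY n x)
    have hsub : Set.uIoc x₀ x ⊆ Set.Icc a b :=
      Set.uIoc_subset_uIcc.trans (Set.uIcc_subset_Icc hx₀ hx)
    have hpt : ∀ s ∈ Set.uIoc x₀ x, ‖Y n s * w n s‖ ≤ C ^ (n + 1) / n ! * |s - x₀| ^ n := by
      intro s hs
      calc ‖Y n s * w n s‖ ≤ C ^ n * |s - x₀| ^ n / n ! * C := by
            rw [norm_mul]
            exact mul_le_mul (hYb s (hsub hs)) (hC n s (hsub hs)) (norm_nonneg _) (by positivity)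
        _ = C ^ (n + 1) / n ! * |s - x₀| ^ n := by ring
    calc ‖Y (n + 1) x‖ = ‖∫ s in Set.uIoc x₀ x, Y n s * w n s‖ := by
          rw [hY, intervalIntegral.norm_integral_eq_norm_integral_uIoc]
      _ ≤ ∫ s in Set.uIoc x₀ x, C ^ (n + 1) / n ! * |s - x₀| ^ n :=
          norm_integral_le_of_norm_le (by fun_prop : Continuous _).integrableOn_uIoc
            ((ae_restrict_iff' measurableSet_uIoc).2 (ae_of_all _ hpt))
      _ = C ^ (n + 1) * |x - x₀| ^ (n + 1) / (n + 1)! := by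
          rw [integral_const_mul, integral_pow_abs_sub_uIoc, Nat.factorial_succ]
          push_cast
          field_simp

theorem exists_norm_le_pow_div_factorial_of_integral_iterate {a b x₀ : ℝ} {g h : ℝ → ℂ}
    {Y : ℕ → ℝ → ℂ} (hx₀ : x₀ ∈ Set.Icc a b) (hg : ContinuousOn g (Set.Icc a b))
    (hh : ContinuousOn h (Set.Icc a b)) (hY0 : ∀ x, Y 0 x = 1)
    (hY : ∀ n x, Y (n + 1) x = ∫ s in x₀..x, Y n s * if Even n then g s else h s) :
    ∃ ρ : ℝ, ∀ n, ContinuousOn (Y n) (Set.Icc a b) ∧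
      ∀ x ∈ Set.Icc a b, ‖Y n x‖ ≤ ρ ^ n / n ! := by
  obtain ⟨Cg, hCg⟩ := isCompact_Icc.exists_bound_of_continuousOn hg
  obtain ⟨Ch, hCh⟩ := isCompact_Icc.exists_bound_of_continuousOn hh
  have hw : ∀ n : ℕ, ContinuousOn (fun s => if Even n then g s else h s) (Set.Icc a b) := by
    intro n; split_ifs <;> assumption
  have hC : ∀ n : ℕ, ∀ s ∈ Set.Icc a b, ‖if Even n then g s else h s‖ ≤ max Cg Ch := by
    intro n s hs
    split_ifs
    exacts [(hCg s hs).trans (le_max_left _ _), (hCh s hs).trans (le_max_right _ _)]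
  have hC0 : 0 ≤ max Cg Ch := (norm_nonneg _).trans (hC 0 x₀ hx₀)
  refine ⟨max Cg Ch * (b - a), fun n => ?_⟩
  obtain ⟨hYc, hYb⟩ := continuousOn_and_norm_le_of_integral_iterate hx₀ hw hC hY0 hY n
  refine ⟨hYc, fun x hx => (hYb x hx).trans ?_⟩
  rw [← mul_pow]
  gcongr
  exact Real.dist_le_of_mem_Icc hx hx₀

noncomputable def paritySeries (lam : ℂ) (Y : ℕ → ℝ → ℂ) (j : ℕ) (x : ℝ) : ℂ :=
  ∑' k : ℕ, lam ^ k * Y (2 * k + j) x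

section paritySeries

variable {a b x₀ : ℝ} {g h : ℝ → ℂ} {lam : ℂ} {Y : ℕ → ℝ → ℂ}

theorem summable_pow_div_factorial_two_mul_add (r : ℝ) (j : ℕ) :
    Summable fun k : ℕ => r ^ (2 * k + j) / (2 * k + j)! :=
  (Real.summable_pow_div_factorial r).comp_injective fun k l hkl => by
    simp only [add_left_inj] at hkl; omega

theorem norm_pow_mul_le_pow_div_factorial {s : Set ℝ} {ρ : ℝ}
    (hYb : ∀ n, ∀ x ∈ s, ‖Y n x‖ ≤ ρ ^ n / n !) (j k : ℕ) {x : ℝ} (hx : x ∈ s) :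
    ‖lam ^ k * Y (2 * k + j) x‖ ≤ (max 1 ‖lam‖ * ρ) ^ (2 * k + j) / (2 * k + j)! := by
  rw [norm_mul, norm_pow, mul_pow, mul_div_assoc]
  refine mul_le_mul ?_ (hYb _ x hx) (norm_nonneg _) (by positivity)
  exact (pow_le_pow_left₀ (norm_nonneg _) (le_max_right _ _) k).trans
    (pow_le_pow_right₀ (le_max_left _ _) (by omega))

theorem hasSum_paritySeries {s : Set ℝ} {ρ : ℝ}
    (hYb : ∀ n, ∀ x ∈ s, ‖Y n x‖ ≤ ρ ^ n / n !) (j : ℕ) {x : ℝ} (hx : x ∈ s) :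
    HasSum (fun k => lam ^ k * Y (2 * k + j) x) (paritySeries lam Y j x) :=
  ((summable_pow_div_factorial_two_mul_add _ j).of_norm_bounded fun k =>
    norm_pow_mul_le_pow_div_factorial hYb j k hx).hasSum

theorem continuousOn_paritySeries {s : Set ℝ} {ρ : ℝ} (hYc : ∀ n, ContinuousOn (Y n) s)
    (hYb : ∀ n, ∀ x ∈ s, ‖Y n x‖ ≤ ρ ^ n / n !) (j : ℕ) :
    ContinuousOn (paritySeries lam Y j) s :=
  continuousOn_tsum (fun _ => continuousOn_const.mul (hYc _))
    (summable_pow_div_factorial_two_mul_add _ j) fun k _ hx =>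
    norm_pow_mul_le_pow_div_factorial hYb j k hx

theorem hasSum_integral_paritySeries_mul {x ρ : ℝ}
    (hx₀ : x₀ ∈ Set.Icc a b) (hx : x ∈ Set.Icc a b)
    (hYc : ∀ n, ContinuousOn (Y n) (Set.Icc a b))
    (hYb : ∀ n, ∀ x ∈ Set.Icc a b, ‖Y n x‖ ≤ ρ ^ n / n !)
    (hg : ContinuousOn g (Set.Icc a b)) (j : ℕ) :
    HasSum (fun k => lam ^ k * ∫ s in x₀..x, Y (2 * k + j) s * g s)
      (∫ s in x₀..x, paritySeries lam Y j s * g s) := by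
  obtain ⟨G, hG⟩ := isCompact_Icc.exists_bound_of_continuousOn hg
  have hsub := Set.uIcc_subset_Icc hx₀ hx
  have hsum := hasSum_intervalIntegral_of_norm_le
    (F := fun k s => lam ^ k * Y (2 * k + j) s * g s)
    (fun k => ((continuousOn_const.mul (hYc _)).mul hg).mono hsub)
    ((summable_pow_div_factorial_two_mul_add _ j).mul_right G) fun k s hs => by
      rw [norm_mul]
      have hk := norm_pow_mul_le_pow_div_factorial (lam := lam) hYb j k (hsub hs)
      exact mul_le_mul hk (hG s (hsub hs)) (norm_nonneg _) ((norm_nonneg _).trans hk)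
  have hterms : (fun k => lam ^ k * ∫ s in x₀..x, Y (2 * k + j) s * g s)
      = fun k => ∫ s in x₀..x, lam ^ k * Y (2 * k + j) s * g s := funext fun k => by
    rw [← intervalIntegral.integral_const_mul]
    simp only [mul_assoc]
  have hseries : (fun s => paritySeries lam Y j s * g s)
      = fun s => ∑' k, lam ^ k * Y (2 * k + j) s * g s := funext fun s => tsum_mul_right.symm
  rwa [hterms, hseries]

theorem paritySeries_one_eq_integral {x ρ : ℝ} (hx₀ : x₀ ∈ Set.Icc a b)
    (hx : x ∈ Set.Icc a b) (hYc : ∀ n, ContinuousOn (Y n) (Set.Icc a b))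
    (hYb : ∀ n, ∀ x ∈ Set.Icc a b, ‖Y n x‖ ≤ ρ ^ n / n !) (hg : ContinuousOn g (Set.Icc a b))
    (hY : ∀ n x, Y (n + 1) x = ∫ s in x₀..x, Y n s * if Even n then g s else h s) :
    paritySeries lam Y 1 x = ∫ s in x₀..x, paritySeries lam Y 0 s * g s := by
  have hsum := hasSum_integral_paritySeries_mul (lam := lam) hx₀ hx hYc hYb hg 0
  rw [paritySeries, ← hsum.tsum_eq]
  refine tsum_congr fun k => ?_
  simp [hY]

theorem paritySeries_zero_eq_add_integral {x ρ : ℝ} (hx₀ : x₀ ∈ Set.Icc a b)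
    (hx : x ∈ Set.Icc a b) (hYc : ∀ n, ContinuousOn (Y n) (Set.Icc a b))
    (hYb : ∀ n, ∀ x ∈ Set.Icc a b, ‖Y n x‖ ≤ ρ ^ n / n !) (hh : ContinuousOn h (Set.Icc a b))
    (hY0 : ∀ x, Y 0 x = 1)
    (hY : ∀ n x, Y (n + 1) x = ∫ s in x₀..x, Y n s * if Even n then g s else h s) :
    paritySeries lam Y 0 x = 1 + lam * ∫ s in x₀..x, paritySeries lam Y 1 s * h s := by
  have hsum := hasSum_integral_paritySeries_mul (lam := lam) hx₀ hx hYc hYb hh 1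
  have hterm : ∀ k, lam ^ (k + 1) * Y (2 * (k + 1) + 0) x
      = lam * (lam ^ k * ∫ s in x₀..x, Y (2 * k + 1) s * h s) := fun k => by
    rw [show 2 * (k + 1) + 0 = 2 * k + 1 + 1 by ring, hY, pow_succ]
    simp only [Nat.even_add_one, even_two_mul, not_true, if_false]
    ring
  rw [paritySeries, (hasSum_paritySeries hYb 0 hx).summable.tsum_eq_zero_add,
    tsum_congr hterm, tsum_mul_left, hsum.tsum_eq]
  simp [hY0]

theorem paritySeries_one_apply_self
    (hY : ∀ n x, Y (n + 1) x = ∫ s in x₀..x, Y n s * if Even n then g s else h s) :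
    paritySeries lam Y 1 x₀ = 0 := by
  simp [paritySeries, hY]

theorem paritySeries_zero_apply_self (hY0 : ∀ x, Y 0 x = 1)
    (hY : ∀ n x, Y (n + 1) x = ∫ s in x₀..x, Y n s * if Even n then g s else h s) :
    paritySeries lam Y 0 x₀ = 1 := by
  rw [paritySeries, tsum_eq_single 0 fun k hk => ?_]
  · simp [hY0]
  · obtain ⟨k, rfl⟩ := Nat.exists_eq_succ_of_ne_zero hk
    rw [show 2 * k.succ + 0 = 2 * k + 1 + 1 by omega, hY]
    simp

theorem hasDerivWithinAt_paritySeries (hx₀ : x₀ ∈ Set.Icc a b)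
    (hg : ContinuousOn g (Set.Icc a b)) (hh : ContinuousOn h (Set.Icc a b))
    (hY0 : ∀ x, Y 0 x = 1)
    (hY : ∀ n x, Y (n + 1) x = ∫ s in x₀..x, Y n s * if Even n then g s else h s)
    {x : ℝ} (hx : x ∈ Set.Icc a b) :
    HasDerivWithinAt (paritySeries lam Y 1) (paritySeries lam Y 0 x * g x) (Set.Icc a b) x ∧
      HasDerivWithinAt (paritySeries lam Y 0) (lam * (paritySeries lam Y 1 x * h x))
        (Set.Icc a b) x := by
  obtain ⟨ρ, hYcb⟩ := exists_norm_le_pow_div_factorial_of_integral_iterate hx₀ hg hh hY0 hY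
  have hYc n := (hYcb n).1
  have hYb n := (hYcb n).2
  constructor
  · exact (hasDerivWithinAt_integral_Icc hx₀ hx
      ((continuousOn_paritySeries hYc hYb 0).mul hg)).congr
      (fun y hy => paritySeries_one_eq_integral hx₀ hy hYc hYb hg hY)
      (paritySeries_one_eq_integral hx₀ hx hYc hYb hg hY)
  · exact (((hasDerivWithinAt_integral_Icc hx₀ hx
      ((continuousOn_paritySeries hYc hYb 1).mul hh)).const_mul lam).const_add 1).congr
      (fun y hy => paritySeries_zero_eq_add_integral hx₀ hy hYc hYb hh hY0 hY)
      (paritySeries_zero_eq_add_integral hx₀ hx hYc hYb hh hY0 hY)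

end paritySeries

theorem zpow_neg_one_pow_succ {G : Type*} [DivInvMonoid G] (z : G) (n : ℕ) :
    z ^ ((-1 : ℤ) ^ (n + 1)) = if Even n then z⁻¹ else z := by
  rcases n.even_or_odd with hn | hn
  · simp [hn, hn.add_one.neg_one_pow, zpow_neg_one]
  · simp [Nat.not_even_iff_odd.2 hn, hn.add_one.neg_one_pow]

theorem div_factorial_succ_eq_integral {x₀ : ℝ} {X w : ℕ → ℝ → ℂ}
    (hX : ∀ n x, X (n + 1) x = (n + 1 : ℂ) * ∫ s in x₀..x, X n s * w n s) (n : ℕ) (x : ℝ) :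
    X (n + 1) x / (n + 1)! = ∫ s in x₀..x, X n s / n ! * w n s := by
  simp only [div_mul_eq_mul_div, intervalIntegral.integral_div, hX, Nat.factorial_succ]
  push_cast
  field_simp

end

section Polya

variable {s : Set ℝ} {x : ℝ} {f f' V W : ℝ → ℂ}

theorem hasDerivWithinAt_mul_polya (hf : HasDerivWithinAt f (f' x) s x)
    (hV : HasDerivWithinAt V (W x * (f x ^ 2)⁻¹) s x) (hfx : f x ≠ 0) :
    HasDerivWithinAt (fun y => f y * V y) (f' x * V x + W x / f x) s x :=
  (hf.mul hV).congr_deriv (by field_simp)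

theorem hasDerivWithinAt_deriv_polya {Q lam : ℂ} (hf : HasDerivWithinAt f (f' x) s x)
    (hf' : HasDerivWithinAt f' (Q * f x) s x) (hV : HasDerivWithinAt V (W x * (f x ^ 2)⁻¹) s x)
    (hW : HasDerivWithinAt W (lam * (V x * f x ^ 2)) s x) (hfx : f x ≠ 0) :
    HasDerivWithinAt (fun y => f' y * V y + W y / f y) ((Q + lam) * (f x * V x)) s x :=
  ((hf'.mul hV).add (hW.div hf hfx)).congr_deriv (by field_simp; ring)

end Polya

section Spps

variable {a b x₀ : ℝ} {q f f' f'' : ℝ → ℂ} {Y : ℕ → ℝ → ℂ} {lam : ℂ}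

theorem tendstoUniformlyOn_mul_paritySeries (hx₀ : x₀ ∈ Set.Icc a b)
    (hfc : ContinuousOn f (Set.Icc a b)) (hfne : ∀ x ∈ Set.Icc a b, f x ≠ 0)
    (hY0 : ∀ x, Y 0 x = 1)
    (hY : ∀ n x, Y (n + 1) x = ∫ s in x₀..x, Y n s * if Even n then (f s ^ 2)⁻¹ else f s ^ 2)
    (j : ℕ) :
    TendstoUniformlyOn (fun N x => ∑ k ∈ range N, f x * (lam ^ k * Y (2 * k + j) x))
      (fun x => f x * paritySeries lam Y j x) atTop (Set.Icc a b) := by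
  have hgc : ContinuousOn (fun s => (f s ^ 2)⁻¹) (Set.Icc a b) :=
    (hfc.pow 2).inv₀ fun s hs => pow_ne_zero 2 (hfne s hs)
  obtain ⟨ρ, hYb⟩ :=
    exists_norm_le_pow_div_factorial_of_integral_iterate hx₀ hgc (hfc.pow 2) hY0 hY
  obtain ⟨M, hM⟩ := isCompact_Icc.exists_bound_of_continuousOn hfc
  exact tendstoUniformlyOn_sum_mul_tsum (summable_pow_div_factorial_two_mul_add _ j)
    (fun k x hx => norm_pow_mul_le_pow_div_factorial (fun n => (hYb n).2) j k hx) hM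

theorem hasDerivWithinAt_mul_paritySeries (hx₀ : x₀ ∈ Set.Icc a b)
    (hf1 : ∀ x ∈ Set.Icc a b, HasDerivAt f (f' x) x)
    (hf2 : ∀ x ∈ Set.Icc a b, HasDerivAt f' (f'' x) x)
    (hode : ∀ x ∈ Set.Icc a b, f'' x = q x * f x) (hfne : ∀ x ∈ Set.Icc a b, f x ≠ 0)
    (hY0 : ∀ x, Y 0 x = 1)
    (hY : ∀ n x, Y (n + 1) x = ∫ s in x₀..x, Y n s * if Even n then (f s ^ 2)⁻¹ else f s ^ 2)
    {x : ℝ} (hx : x ∈ Set.Icc a b) :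
    HasDerivWithinAt (fun y => f y * paritySeries lam Y 1 y)
        (f' x * paritySeries lam Y 1 x + paritySeries lam Y 0 x / f x) (Set.Icc a b) x ∧
      HasDerivWithinAt (fun y => f' y * paritySeries lam Y 1 y + paritySeries lam Y 0 y / f y)
        ((q x + lam) * (f x * paritySeries lam Y 1 x)) (Set.Icc a b) x := by
  have hfc : ContinuousOn f (Set.Icc a b) := HasDerivAt.continuousOn hf1
  have hgc : ContinuousOn (fun s => (f s ^ 2)⁻¹) (Set.Icc a b) :=
    (hfc.pow 2).inv₀ fun s hs => pow_ne_zero 2 (hfne s hs)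
  obtain ⟨hV, hW⟩ := hasDerivWithinAt_paritySeries (lam := lam) hx₀ hgc (hfc.pow 2) hY0 hY hx
  have hf := (hf1 x hx).hasDerivWithinAt (s := Set.Icc a b)
  have hf' := (hf2 x hx).hasDerivWithinAt (s := Set.Icc a b)
  rw [hode x hx] at hf'
  exact ⟨hasDerivWithinAt_mul_polya hf hV (hfne x hx),
    hasDerivWithinAt_deriv_polya hf hf' hV hW (hfne x hx)⟩

end Spps

theorem stmt4_general
    (a b x₀ : ℝ) (hab : a < b) (hx₀ : x₀ ∈ Set.Icc a b)
    (q f f' f'' : ℝ → ℂ)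
    (hf1 : ∀ x ∈ Set.Icc a b, HasDerivAt f (f' x) x)
    (hf2 : ∀ x ∈ Set.Icc a b, HasDerivAt f' (f'' x) x)
    (hode : ∀ x ∈ Set.Icc a b, f'' x = q x * f x)
    (hfne : ∀ x ∈ Set.Icc a b, f x ≠ 0)
    (X Xt : ℕ → ℝ → ℂ)
    (hX0 : ∀ x, X 0 x = 1)
    (hXrec : ∀ n x, X (n + 1) x
      = (n + 1 : ℂ) * ∫ s in x₀..x, X n s * ((f s) ^ 2) ^ ((-1 : ℤ) ^ (n + 1)))
    (φ : ℕ → ℝ → ℂ)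
    (hφ : ∀ k x, φ k x = if Odd k then f x * X k x else f x * Xt k x)
    (lam : ℂ)
    (u₂ : ℝ → ℂ)
    (hu₂ : ∀ x, u₂ x = ∑' k : ℕ, lam ^ k / ((2 * k + 1).factorial : ℂ) * φ (2 * k + 1) x) :
    TendstoUniformlyOn
      (fun N x => ∑ k ∈ range N, lam ^ k / ((2 * k + 1).factorial : ℂ) * φ (2 * k + 1) x)
      u₂ atTop (Set.Icc a b)
    ∧ (∀ x ∈ Set.Ioo a b, deriv (deriv u₂) x - q x * u₂ x = lam * u₂ x)
    ∧ u₂ x₀ = 0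
    ∧ derivWithin u₂ (Set.Icc a b) x₀ = 1 / f x₀ := by
  set Y : ℕ → ℝ → ℂ := fun n x => X n x / n.factorial
  have hY0 : ∀ x, Y 0 x = 1 := by simp [Y, hX0]
  have hY : ∀ n x, Y (n + 1) x
      = ∫ s in x₀..x, Y n s * if Even n then (f s ^ 2)⁻¹ else f s ^ 2 := fun n x => by
    simp only [Y, div_factorial_succ_eq_integral hXrec, zpow_neg_one_pow_succ]
  have hterm : ∀ k x, lam ^ k / ((2 * k + 1).factorial : ℂ) * φ (2 * k + 1) x
      = f x * (lam ^ k * Y (2 * k + 1) x) := fun k x => by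
    rw [hφ, if_pos (odd_two_mul_add_one k)]
    ring
  have hu : u₂ = fun x => f x * paritySeries lam Y 1 x :=
    funext fun x => by rw [hu₂, tsum_congr (hterm · x), tsum_mul_left, paritySeries]
  have hderiv := fun x (hx : x ∈ Set.Icc a b) => hu ▸
    hasDerivWithinAt_mul_paritySeries (lam := lam) hx₀ hf1 hf2 hode hfne hY0 hY hx
  refine ⟨?_, fun x hx => ?_, ?_, ?_⟩
  · simpa only [hterm, hu] using tendstoUniformlyOn_mul_paritySeries (lam := lam) hx₀
      (HasDerivAt.continuousOn hf1) hfne hY0 hY 1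
  · rw [deriv_deriv_eq_of_hasDerivWithinAt_Icc (fun y hy => (hderiv y hy).1)
      (hderiv x (Set.Ioo_subset_Icc_self hx)).2 hx, hu]
    ring
  · simp [hu, paritySeries_one_apply_self hY]
  · rw [((hderiv x₀ hx₀).1).derivWithin (uniqueDiffOn_Icc hab x₀ hx₀),
      paritySeries_one_apply_self hY, paritySeries_zero_apply_self hY0 hY]
    ring

/-- SPPS: the series `u₂ = Σ λᵏ φ_{2k+1}/(2k+1)!` converges uniformly on `[a,b]`,
satisfies `u₂'' - q u₂ = λ u₂` on `(a,b)`, and the initial conditions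
`u₂(x₀) = 0`, `u₂'(x₀) = 1/f(x₀)`. -/
theorem stmt4
    (a b x₀ : ℝ) (hab : a < b) (hx₀ : x₀ ∈ Set.Icc a b)
    (q f f' f'' : ℝ → ℂ)
    (hq : ContinuousOn q (Set.Icc a b))
    (hf1 : ∀ x ∈ Set.Icc a b, HasDerivAt f (f' x) x)
    (hf2 : ∀ x ∈ Set.Icc a b, HasDerivAt f' (f'' x) x)
    (hode : ∀ x ∈ Set.Icc a b, f'' x = q x * f x)
    (hfne : ∀ x ∈ Set.Icc a b, f x ≠ 0)
    (X Xt : ℕ → ℝ → ℂ)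
    (hX0 : ∀ x, X 0 x = 1) (hXt0 : ∀ x, Xt 0 x = 1)
    (hXrec : ∀ n x, X (n + 1) x
      = (n + 1 : ℂ) * ∫ s in x₀..x, X n s * ((f s) ^ 2) ^ ((-1 : ℤ) ^ (n + 1)))
    (hXtrec : ∀ n x, Xt (n + 1) x
      = (n + 1 : ℂ) * ∫ s in x₀..x, Xt n s * ((f s) ^ 2) ^ ((-1 : ℤ) ^ n))
    (φ : ℕ → ℝ → ℂ)
    (hφ : ∀ k x, φ k x = if Odd k then f x * X k x else f x * Xt k x)
    (lam : ℂ)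
    (u₂ : ℝ → ℂ)
    (hu₂ : ∀ x, u₂ x = ∑' k : ℕ, lam ^ k / ((2 * k + 1).factorial : ℂ) * φ (2 * k + 1) x) :
    TendstoUniformlyOn
      (fun N x => ∑ k ∈ range N, lam ^ k / ((2 * k + 1).factorial : ℂ) * φ (2 * k + 1) x)
      u₂ atTop (Set.Icc a b)
    ∧ (∀ x ∈ Set.Ioo a b, deriv (deriv u₂) x - q x * u₂ x = lam * u₂ x)
    ∧ u₂ x₀ = 0
    ∧ derivWithin u₂ (Set.Icc a b) x₀ = 1 / f x₀ :=
  stmt4_general a b x₀ hab hx₀ q f f' f'' hf1 hf2 hode hfne X Xt hX0 hXrec φ hφ lam u₂ hu₂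
end

section
/- Let K_s(x,t) = -t√(c(x²-t²)) J₁(√(c(x²-t²)))/(x²-t²) for a constant c > 0. Then T_s[1](x) := 1 + ∫₀ˣ K_s(x,t) dt = J₀(x√c), and consequently (d²/dx² + c) T_s[1](x) = √c J₁(x√c)/x ≠ 0 for small x > 0. -/
open MeasureTheory

/-- The Bessel function of the first kind of order 0, defined by its power series. -/
noncomputable def besselJ0 (x : ℝ) : ℝ :=
  ∑' k : ℕ, (-1) ^ k * x ^ (2 * k) / (4 ^ k * (k.factorial : ℝ) ^ 2)

/-- The Bessel function of the first kind of order 1, defined by its power series. -/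
noncomputable def besselJ1 (x : ℝ) : ℝ :=
  ∑' k : ℕ, (-1) ^ k * x ^ (2 * k + 1) /
    (2 ^ (2 * k + 1) * (k.factorial : ℝ) * ((k + 1).factorial : ℝ))

/-
Everything is written in the variable `v = y²`: `J₀(y) = G (y²)` and `J₁(y) = y H (y²)` with
`G = besselJ0Sq`, `H = besselJ1Sq` entire. Their coefficients `a`, `b` satisfy
`a k = 2 (k + 1) b k` and `(k + 1) a (k + 1) = -b k / 2`, i.e. `G = 2 H + 2 v H'` and `G' = -H / 2`. The second identity
makes `t ↦ -G (c (x² - t²))` a primitive of the kernel, so `T_s[1](x) = G (c x²) = J₀(x√c)`;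
the first turns `f(y) = G (c y²)` into a solution of `f'' + c f = c H (c y²)`, whose right-hand
side is `√c J₁(x√c) / x` and tends to `c / 2 ≠ 0`.
-/

open Filter Topology FormalMultilinearSeries

section PowerSeries

variable {𝕜 : Type*} [NontriviallyNormedField 𝕜] {a : ℕ → 𝕜}

theorem ofScalars_radius_eq_top_of_norm_succ_le (ha : ∀ n, a n ≠ 0)
    (h : ∀ n : ℕ, ‖a (n + 1)‖ ≤ ‖a n‖ / (n + 1)) : (ofScalars 𝕜 a).radius = ⊤ := by
  refine ofScalars_radius_eq_top_of_tendsto 𝕜 a (.of_forall ha) ?_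
  refine squeeze_zero (fun n => by positivity) (fun n => ?_)
    tendsto_one_div_add_atTop_nhds_zero_nat
  rw [div_le_iff₀ (norm_pos_iff.mpr (ha n)), one_div_mul_eq_div]
  exact h n

variable [CompleteSpace 𝕜]

theorem hasFPowerSeriesOnBall_tsum_mul_pow (ha : (ofScalars 𝕜 a).radius = ⊤) :
    HasFPowerSeriesOnBall (fun z => ∑' n, a n * z ^ n) (ofScalars 𝕜 a) 0 ⊤ := by
  have h := (ofScalars 𝕜 a).hasFPowerSeriesOnBall (by simp [ha])
  rw [ha] at h
  convert h using 1
  ext z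
  simp [FormalMultilinearSeries.sum, mul_comm]

theorem summable_mul_pow (ha : (ofScalars 𝕜 a).radius = ⊤) (z : 𝕜) :
    Summable fun n => a n * z ^ n := by
  simpa [mul_comm] using
    ((hasFPowerSeriesOnBall_tsum_mul_pow ha).hasSum (y := z) (by simp)).summable

theorem differentiable_tsum_mul_pow (ha : (ofScalars 𝕜 a).radius = ⊤) :
    Differentiable 𝕜 fun z => ∑' n, a n * z ^ n := by
  simpa [differentiableOn_univ] using (hasFPowerSeriesOnBall_tsum_mul_pow ha).differentiableOn

theorem hasSum_deriv_tsum_mul_pow (ha : (ofScalars 𝕜 a).radius = ⊤) (z : 𝕜) :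
    HasSum (fun n : ℕ => (n + 1) * a (n + 1) * z ^ n)
      (deriv (fun w => ∑' n, a n * w ^ n) z) := by
  have h := ((hasFPowerSeriesOnBall_tsum_mul_pow ha).fderiv.hasSum (y := z) (by simp)).mapL
    (ContinuousLinearMap.apply 𝕜 𝕜 (1 : 𝕜))
  simp only [zero_add, ContinuousLinearMap.apply_apply] at h
  refine h.congr_fun fun n => ?_
  rw [apply_eq_pow_smul_coeff]
  simp only [_root_.smul_apply, derivSeries_coeff_one, coeff_ofScalars, nsmul_eq_mul,
    Nat.cast_add, Nat.cast_one, smul_eq_mul]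
  ring

theorem hasDerivAt_tsum_mul_pow (ha : (ofScalars 𝕜 a).radius = ⊤) (z : 𝕜) :
    HasDerivAt (fun w => ∑' n, a n * w ^ n) (∑' n : ℕ, (n + 1) * a (n + 1) * z ^ n) z := by
  rw [(hasSum_deriv_tsum_mul_pow ha z).tsum_eq]
  exact (differentiable_tsum_mul_pow ha z).hasDerivAt

end PowerSeries

noncomputable def besselJ0Coeff (k : ℕ) : ℝ := (-1) ^ k / (4 ^ k * (k.factorial : ℝ) ^ 2)

noncomputable def besselJ1Coeff (k : ℕ) : ℝ :=
  (-1) ^ k / (2 * 4 ^ k * (k.factorial : ℝ) * ((k + 1).factorial : ℝ))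

theorem besselJ0Coeff_eq_mul_besselJ1Coeff (k : ℕ) :
    besselJ0Coeff k = 2 * (k + 1) * besselJ1Coeff k := by
  simp only [besselJ0Coeff, besselJ1Coeff, Nat.factorial_succ, Nat.cast_mul]
  field_simp
  push_cast
  ring

theorem succ_mul_besselJ0Coeff_succ (k : ℕ) :
    (k + 1) * besselJ0Coeff (k + 1) = -besselJ1Coeff k / 2 := by
  simp only [besselJ0Coeff, besselJ1Coeff, Nat.factorial_succ, Nat.cast_mul]
  field_simp
  push_cast
  ring

theorem besselJ0Coeff_succ (k : ℕ) :
    besselJ0Coeff (k + 1) = -besselJ0Coeff k / (4 * (k + 1) ^ 2) := by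
  have := succ_mul_besselJ0Coeff_succ k
  rw [besselJ0Coeff_eq_mul_besselJ1Coeff k]
  field_simp
  linarith

theorem besselJ1Coeff_succ (k : ℕ) :
    besselJ1Coeff (k + 1) = -besselJ1Coeff k / (4 * (k + 1) * (k + 2)) := by
  have h := succ_mul_besselJ0Coeff_succ k
  rw [besselJ0Coeff_eq_mul_besselJ1Coeff (k + 1)] at h
  push_cast at h
  field_simp
  linarith

theorem besselJ0Coeff_ne_zero (k : ℕ) : besselJ0Coeff k ≠ 0 := by
  unfold besselJ0Coeff
  have := k.factorial_pos
  positivity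

theorem besselJ1Coeff_ne_zero (k : ℕ) : besselJ1Coeff k ≠ 0 := by
  unfold besselJ1Coeff
  have := k.factorial_pos
  have := (k + 1).factorial_pos
  positivity

theorem radius_ofScalars_besselJ0Coeff : (ofScalars ℝ besselJ0Coeff).radius = ⊤ := by
  refine ofScalars_radius_eq_top_of_norm_succ_le besselJ0Coeff_ne_zero fun n => ?_
  rw [besselJ0Coeff_succ, norm_div, norm_neg,
    Real.norm_of_nonneg (by positivity : (0 : ℝ) ≤ 4 * (n + 1) ^ 2)]
  gcongr
  nlinarith

theorem radius_ofScalars_besselJ1Coeff : (ofScalars ℝ besselJ1Coeff).radius = ⊤ := by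
  refine ofScalars_radius_eq_top_of_norm_succ_le besselJ1Coeff_ne_zero fun n => ?_
  rw [besselJ1Coeff_succ, norm_div, norm_neg,
    Real.norm_of_nonneg (by positivity : (0 : ℝ) ≤ 4 * (n + 1) * (n + 2))]
  gcongr
  nlinarith

noncomputable def besselJ0Sq (v : ℝ) : ℝ := ∑' k, besselJ0Coeff k * v ^ k

noncomputable def besselJ1Sq (v : ℝ) : ℝ := ∑' k, besselJ1Coeff k * v ^ k

theorem besselJ0_eq_besselJ0Sq (y : ℝ) : besselJ0 y = besselJ0Sq (y ^ 2) := by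
  refine tsum_congr fun k => ?_
  rw [besselJ0Coeff, pow_mul]
  ring

theorem besselJ1_eq_mul_besselJ1Sq (y : ℝ) : besselJ1 y = y * besselJ1Sq (y ^ 2) := by
  rw [besselJ1Sq, ← tsum_mul_left]
  refine tsum_congr fun k => ?_
  rw [besselJ1Coeff, pow_succ, pow_succ, pow_mul, pow_mul]
  ring

theorem besselJ0Sq_zero : besselJ0Sq 0 = 1 := by
  rw [besselJ0Sq, tsum_eq_single 0 fun k hk => by simp [hk]]
  simp [besselJ0Coeff]

theorem besselJ1Sq_zero : besselJ1Sq 0 = 1 / 2 := by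
  rw [besselJ1Sq, tsum_eq_single 0 fun k hk => by simp [hk]]
  simp [besselJ1Coeff]

theorem hasDerivAt_besselJ0Sq (v : ℝ) : HasDerivAt besselJ0Sq (-besselJ1Sq v / 2) v := by
  refine (hasDerivAt_tsum_mul_pow radius_ofScalars_besselJ0Coeff v).congr_deriv ?_
  simp_rw [succ_mul_besselJ0Coeff_succ, besselJ1Sq, ← tsum_neg, ← tsum_div_const]
  congr 1 with k
  ring

theorem differentiable_besselJ1Sq : Differentiable ℝ besselJ1Sq :=
  differentiable_tsum_mul_pow radius_ofScalars_besselJ1Coeff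

theorem besselJ0Sq_eq_add_mul_deriv (v : ℝ) :
    besselJ0Sq v = 2 * besselJ1Sq v + 2 * v * deriv besselJ1Sq v := by
  have hsum : HasSum (fun k => besselJ1Coeff k * v ^ k) (besselJ1Sq v) :=
    (summable_mul_pow radius_ofScalars_besselJ1Coeff v).hasSum
  have hderiv : HasSum (fun k => k * besselJ1Coeff k * v ^ k) (v * deriv besselJ1Sq v) := by
    have hshift : HasSum (fun k : ℕ => ((k + 1 : ℕ) : ℝ) * besselJ1Coeff (k + 1) * v ^ (k + 1))
        (v * deriv besselJ1Sq v) :=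
      ((hasSum_deriv_tsum_mul_pow radius_ofScalars_besselJ1Coeff v).mul_left v).congr_fun
        fun k => by push_cast; ring
    simpa using HasSum.zero_add (f := fun k : ℕ => (k : ℝ) * besselJ1Coeff k * v ^ k) hshift
  rw [besselJ0Sq, mul_assoc 2 v, ← ((hsum.mul_left 2).add (hderiv.mul_left 2)).tsum_eq]
  refine tsum_congr fun k => ?_
  rw [besselJ0Coeff_eq_mul_besselJ1Coeff]
  ring

open Real in
noncomputable def sineKernel (c x t : ℝ) : ℝ :=
  -(t * √(c * (x ^ 2 - t ^ 2)) * besselJ1 (√(c * (x ^ 2 - t ^ 2)))) / (x ^ 2 - t ^ 2)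

theorem sineKernel_eq_of_sq_lt {c x t : ℝ} (hc : 0 ≤ c) (ht : t ^ 2 < x ^ 2) :
    sineKernel c x t = -(c * t) * besselJ1Sq (c * (x ^ 2 - t ^ 2)) := by
  have hpos : 0 < x ^ 2 - t ^ 2 := by linarith
  rw [sineKernel, besselJ1_eq_mul_besselJ1Sq, Real.sq_sqrt (by positivity), ← mul_assoc,
    mul_assoc t, Real.mul_self_sqrt (by positivity)]
  field_simp

theorem integral_sineKernel {c x : ℝ} (hc : 0 ≤ c) (hx : 0 ≤ x) :
    ∫ t in (0 : ℝ)..x, sineKernel c x t = besselJ0Sq (c * x ^ 2) - 1 := by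
  have hprim : ∀ t, HasDerivAt (fun t => -besselJ0Sq (c * (x ^ 2 - t ^ 2)))
      (-(c * t) * besselJ1Sq (c * (x ^ 2 - t ^ 2))) t := fun t =>
    ((hasDerivAt_besselJ0Sq _).comp t
      (((hasDerivAt_pow 2 t).const_sub (x ^ 2)).const_mul c)).neg.congr_deriv (by push_cast; ring)
  have hcont : Continuous fun t => -(c * t) * besselJ1Sq (c * (x ^ 2 - t ^ 2)) := by
    have := differentiable_besselJ1Sq.continuous
    fun_prop
  have hae : ∀ᵐ t, t ∈ Set.uIoc 0 x →
      sineKernel c x t = -(c * t) * besselJ1Sq (c * (x ^ 2 - t ^ 2)) := by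
    filter_upwards [volume.ae_ne x] with t htx ht
    rw [Set.uIoc_of_le hx] at ht
    exact sineKernel_eq_of_sq_lt hc
      (pow_lt_pow_left₀ (lt_of_le_of_ne ht.2 htx) ht.1.le two_ne_zero)
  rw [intervalIntegral.integral_congr_ae hae,
    intervalIntegral.integral_eq_sub_of_hasDerivAt (fun t _ => hprim t)
      (hcont.intervalIntegrable 0 x), sub_self, mul_zero, besselJ0Sq_zero]
  ring_nf

theorem hasDerivAt_besselJ0Sq_mul_sq (c y : ℝ) :
    HasDerivAt (fun y => besselJ0Sq (c * y ^ 2)) (-(c * y) * besselJ1Sq (c * y ^ 2)) y :=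
  ((hasDerivAt_besselJ0Sq _).comp y ((hasDerivAt_pow 2 y).const_mul c)).congr_deriv
    (by push_cast; ring)

-- Bessel's equation for `f y = J₀(√c y)`, with its first-order term `f' / y = -c H (c y²)` moved
-- to the right-hand side.
theorem deriv_deriv_besselJ0Sq_mul_sq_add (c y : ℝ) :
    deriv (deriv fun y => besselJ0Sq (c * y ^ 2)) y + c * besselJ0Sq (c * y ^ 2) =
      c * besselJ1Sq (c * y ^ 2) := by
  have hderiv : deriv (fun y => besselJ0Sq (c * y ^ 2)) =
      fun y => -(c * y) * besselJ1Sq (c * y ^ 2) :=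
    funext fun y => (hasDerivAt_besselJ0Sq_mul_sq c y).deriv
  have hlin : HasDerivAt (fun y => -(c * y)) (-c) y :=
    ((hasDerivAt_id y).const_mul c).fun_neg.congr_deriv (by ring)
  have hJ1 : HasDerivAt (fun y => besselJ1Sq (c * y ^ 2))
      (deriv besselJ1Sq (c * y ^ 2) * (c * (2 * y))) y :=
    ((differentiable_besselJ1Sq _).hasDerivAt.comp y ((hasDerivAt_pow 2 y).const_mul c)).congr_deriv
      (by ring)
  rw [hderiv, (hlin.fun_mul hJ1).deriv, besselJ0Sq_eq_add_mul_deriv]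
  ring

theorem eventually_besselJ1Sq_mul_sq_ne_zero (c : ℝ) :
    ∀ᶠ y in 𝓝 0, besselJ1Sq (c * y ^ 2) ≠ 0 := by
  have hcont : Continuous fun y : ℝ => besselJ1Sq (c * y ^ 2) :=
    differentiable_besselJ1Sq.continuous.comp (by fun_prop)
  exact hcont.continuousAt.eventually_ne (by simp [besselJ1Sq_zero])

/-- For the 'sine' transmutation kernel of `d²/dx² + c`, one has
`T_s[1](x) = J₀(x√c)` and hence `(d²/dx² + c) T_s[1](x) = √c J₁(x√c)/x ≠ 0`
for small `x > 0`. -/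
theorem stmt7 (c : ℝ) (hc : 0 < c)
    (Ks : ℝ → ℝ → ℝ)
    (hKs : ∀ x t, Ks x t
      = -(t * Real.sqrt (c * (x ^ 2 - t ^ 2)) *
          besselJ1 (Real.sqrt (c * (x ^ 2 - t ^ 2)))) / (x ^ 2 - t ^ 2))
    (Ts1 : ℝ → ℝ)
    (hTs1 : ∀ x, Ts1 x = 1 + ∫ t in (0:ℝ)..x, Ks x t) :
    (∀ x : ℝ, 0 ≤ x → Ts1 x = besselJ0 (x * Real.sqrt c)) ∧
    ∃ ε > (0:ℝ), ∀ x : ℝ, 0 < x → x < ε →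
      deriv (deriv Ts1) x + c * Ts1 x = Real.sqrt c * besselJ1 (x * Real.sqrt c) / x ∧
      Real.sqrt c * besselJ1 (x * Real.sqrt c) / x ≠ 0 := by
  have hK : Ks = sineKernel c := funext fun x => funext (hKs x)
  have hT : ∀ x, 0 ≤ x → Ts1 x = besselJ0Sq (c * x ^ 2) := fun x hx => by
    rw [hTs1, hK, integral_sineKernel hc.le hx]
    ring
  have hsq : ∀ x, (x * Real.sqrt c) ^ 2 = c * x ^ 2 := fun x => by
    rw [mul_pow, Real.sq_sqrt hc.le, mul_comm]
  refine ⟨fun x hx => by rw [hT x hx, besselJ0_eq_besselJ0Sq, hsq], ?_⟩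
  obtain ⟨ε, hε, hne⟩ := Metric.eventually_nhds_iff.mp (eventually_besselJ1Sq_mul_sq_ne_zero c)
  refine ⟨ε, hε, fun x hx hxε => ?_⟩
  have hJ1 : Real.sqrt c * besselJ1 (x * Real.sqrt c) / x = c * besselJ1Sq (c * x ^ 2) := by
    rw [besselJ1_eq_mul_besselJ1Sq, hsq]
    field_simp
    rw [Real.sq_sqrt hc.le]
  have hev : Ts1 =ᶠ[𝓝 x] fun y => besselJ0Sq (c * y ^ 2) :=
    eventually_of_mem (Ioi_mem_nhds hx) fun y hy => hT y (le_of_lt hy)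
  rw [hJ1, hev.deriv.deriv_eq, hev.eq_of_nhds]
  refine ⟨deriv_deriv_besselJ0Sq_mul_sq_add c x, mul_ne_zero hc.ne' (hne ?_)⟩
  rwa [Real.dist_eq, sub_zero, abs_of_pos hx]
end

section
/- Let c be a constant and define K(x,y) = -½ √(c(x²-y²)) J₁(√(c(x²-y²)))/(x-y). Then H(s,t) := K(s+t, s-t) = -√(cst) J₁(2√(cst))/(2t) satisfies the Goursat problem ∂²H/∂s∂t = -c H, H(s,0) = -cs/2, H(0,t) = 0. -/
open MeasureTheory

/-- The transmutation kernel for `d²/dx² + c`. -/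
noncomputable def transmutK (c x y : ℝ) : ℝ :=
  -(1 / 2) * Real.sqrt (c * (x ^ 2 - y ^ 2)) *
    besselJ1 (Real.sqrt (c * (x ^ 2 - y ^ 2))) / (x - y)

/-- The Goursat-problem solution `H(s,t) = -√(cst) J₁(2√(cst))/(2t)`, given by its
(everywhere convergent) power series which extends the closed formula to all points. -/
noncomputable def goursatH (c s t : ℝ) : ℝ :=
  -∑' k : ℕ, (-1) ^ k * c ^ (k + 1) * s ^ (k + 1) * t ^ k /
    (2 * (k.factorial : ℝ) * ((k + 1).factorial : ℝ))

open scoped Nat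

/-!
`H = ∑ a k s^(k+1) t^k` with coefficients decaying like `1 / k!`, so it may be differentiated
term by term in `s` and then in `t`; `∂²/∂s∂t` lowers the index by one, and the coefficient
recursion `(k + 2)(k + 1) a (k + 1) = -c a k` turns the result into `-c H`.
The closed form comes from `x J₁(2x) = ∑ (-1)^k x^(2k+2) / (k! (k+1)!)` at `x = √(cst)`, and
`K(s+t, s-t)` reduces to it because `c((s+t)² - (s-t)²) = 4cst`.
-/

section PowerSeries

variable {a : ℕ → ℝ}

theorem summable_abs_mul_pow_of_abs_le {C r : ℝ} (h : ∀ k, |a k| ≤ C * r ^ k / k !) (R : ℝ) :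
    Summable fun k => |a k| * R ^ k := by
  refine .of_norm_bounded ((Real.summable_pow_div_factorial (r * |R|)).mul_left C) fun k => ?_
  calc ‖|a k| * R ^ k‖ = |a k| * |R| ^ k := by rw [Real.norm_eq_abs, abs_mul, abs_abs, abs_pow]
    _ ≤ C * r ^ k / k ! * |R| ^ k := by gcongr; exact h k
    _ = C * ((r * |R|) ^ k / k !) := by rw [mul_pow]; ring

theorem summable_natCast_add_one_mul_abs_mul_pow (ha : ∀ R : ℝ, Summable fun k => |a k| * R ^ k)
    (R : ℝ) : Summable fun k => (k + 1) * |a k| * R ^ k := by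
  refine .of_norm_bounded (ha (2 * |R|)) fun k => ?_
  have hk : (k + 1 : ℝ) ≤ 2 ^ k := by exact_mod_cast Nat.lt_two_pow_self
  calc ‖(k + 1) * |a k| * R ^ k‖ = |a k| * ((k + 1) * |R| ^ k) := by
        simp only [norm_mul, norm_pow, Real.norm_eq_abs, abs_abs]
        rw [abs_of_nonneg (by positivity : (0 : ℝ) ≤ k + 1)]; ring
    _ ≤ |a k| * (2 ^ k * |R| ^ k) := by gcongr
    _ = |a k| * (2 * |R|) ^ k := by rw [mul_pow]

theorem abs_mul_natCast_mul_pow_sub_one_le (m k : ℕ) {R y : ℝ} (hR : 1 ≤ R) (hy : |y| ≤ R) :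
    |a k * ((k + m : ℕ) * y ^ (k + m - 1))| ≤ (m + 1) * R ^ m * ((k + 1) * |a k| * R ^ k) := by
  have hkm : ((k + m : ℕ) : ℝ) ≤ (m + 1) * (k + 1) := by push_cast; nlinarith
  have hpow : |y| ^ (k + m - 1) ≤ R ^ m * R ^ k := by
    rw [← pow_add]
    calc |y| ^ (k + m - 1) ≤ R ^ (k + m - 1) := by gcongr
      _ ≤ R ^ (m + k) := pow_le_pow_right₀ hR (by omega)
  calc |a k * ((k + m : ℕ) * y ^ (k + m - 1))| = |a k| * ((k + m : ℕ) * |y| ^ (k + m - 1)) := by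
        rw [abs_mul, abs_mul, abs_pow, Nat.abs_cast]
    _ ≤ |a k| * ((m + 1) * (k + 1) * (R ^ m * R ^ k)) := by gcongr
    _ = (m + 1) * R ^ m * ((k + 1) * |a k| * R ^ k) := by ring

theorem summable_mul_natCast_mul_pow_sub_one (ha : ∀ R : ℝ, Summable fun k => |a k| * R ^ k)
    (m : ℕ) (x : ℝ) : Summable fun k => a k * ((k + m : ℕ) * x ^ (k + m - 1)) :=
  .of_norm_bounded ((summable_natCast_add_one_mul_abs_mul_pow ha _).mul_left _) fun k =>
    abs_mul_natCast_mul_pow_sub_one_le m k (R := |x| + 1) (by linarith [abs_nonneg x])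
      (by linarith)

theorem hasDerivAt_tsum_mul_pow_add (ha : ∀ R : ℝ, Summable fun k => |a k| * R ^ k)
    (m : ℕ) (x : ℝ) :
    HasDerivAt (fun y => ∑' k, a k * y ^ (k + m))
      (∑' k, a k * ((k + m : ℕ) * x ^ (k + m - 1))) x := by
  set R := |x| + 1
  have hR : 1 ≤ R := by linarith [abs_nonneg x]
  have hx : x ∈ Metric.ball 0 R := by rw [mem_ball_zero_iff, Real.norm_eq_abs]; linarith
  refine hasDerivAt_tsum_of_isPreconnected
    ((summable_natCast_add_one_mul_abs_mul_pow ha R).mul_left ((m + 1) * R ^ m))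
    Metric.isOpen_ball (convex_ball 0 R).isPreconnected
    (fun k y _ => (hasDerivAt_pow (k + m) y).const_mul (a k))
    (fun k y hy => abs_mul_natCast_mul_pow_sub_one_le m k hR ?_) hx ?_ hx
  · rw [mem_ball_zero_iff, Real.norm_eq_abs] at hy; exact hy.le
  · refine .of_norm_bounded ((ha |x|).mul_right (|x| ^ m)) fun k => ?_
    rw [Real.norm_eq_abs, abs_mul, abs_pow, pow_add, mul_assoc]

end PowerSeries

section Goursat

variable (c : ℝ)

noncomputable def goursatCoeff (k : ℕ) : ℝ := -((-1) ^ k * c ^ (k + 1) / (2 * k ! * (k + 1)!))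

theorem goursatH_eq_tsum (s t : ℝ) :
    goursatH c s t = ∑' k, goursatCoeff c k * t ^ k * s ^ (k + 1) := by
  rw [goursatH, ← tsum_neg]
  exact tsum_congr fun k => by rw [goursatCoeff]; ring

theorem natCast_add_one_mul_abs_goursatCoeff_le (k : ℕ) :
    (k + 1) * |goursatCoeff c k| ≤ |c| * |c| ^ k / k ! := by
  have habs : |goursatCoeff c k| = |c| ^ (k + 1) / (2 * k ! * (k + 1)!) := by
    simp [goursatCoeff, abs_div, abs_mul, abs_pow]
  have hfac : ((k + 1)! : ℝ) = (k + 1) * k ! := by push_cast [Nat.factorial_succ]; ring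
  have hk : (1 : ℝ) ≤ k ! := by exact_mod_cast k.factorial_pos
  calc (k + 1) * |goursatCoeff c k| = |c| ^ (k + 1) / k ! * (1 / (2 * k !)) := by
        rw [habs, hfac]; field_simp
    _ ≤ |c| ^ (k + 1) / k ! * 1 := by gcongr; rw [div_le_one (by positivity)]; linarith
    _ = |c| * |c| ^ k / k ! := by ring

theorem goursatCoeff_succ (k : ℕ) :
    (k + 2) * (k + 1) * goursatCoeff c (k + 1) = -c * goursatCoeff c k := by
  have hfac : ((k + 1)! : ℝ) = (k + 1) * k ! := by push_cast [Nat.factorial_succ]; ring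
  have hfac2 : ((k + 2)! : ℝ) = (k + 2) * (k + 1)! := by push_cast [Nat.factorial_succ]; ring
  rw [goursatCoeff, goursatCoeff, hfac2, hfac]
  field_simp
  ring

theorem abs_goursatCoeff_mul_le (x : ℝ) (k : ℕ) :
    |goursatCoeff c k * ((k + 1) * x ^ k)| ≤ |c| * |c * x| ^ k / k ! := by
  calc |goursatCoeff c k * ((k + 1) * x ^ k)| = (k + 1) * |goursatCoeff c k| * |x| ^ k := by
        rw [abs_mul, abs_mul, abs_pow, abs_of_pos (by positivity : (0 : ℝ) < k + 1)]; ring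
    _ ≤ |c| * |c| ^ k / k ! * |x| ^ k := by
        gcongr; exact natCast_add_one_mul_abs_goursatCoeff_le c k
    _ = |c| * |c * x| ^ k / k ! := by rw [abs_mul, mul_pow]; ring

theorem hasDerivAt_goursatH_fst (s t : ℝ) :
    HasDerivAt (fun s' => goursatH c s' t)
      (∑' k, goursatCoeff c k * ((k + 1) * s ^ k) * t ^ k) s := by
  have ha : ∀ R : ℝ, Summable fun k => |goursatCoeff c k * t ^ k| * R ^ k := by
    refine summable_abs_mul_pow_of_abs_le fun k => le_trans ?_ (abs_goursatCoeff_mul_le c t k)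
    rw [abs_mul, abs_mul, abs_mul, abs_of_pos (by positivity : (0 : ℝ) < k + 1)]
    exact mul_le_mul_of_nonneg_left
      (le_mul_of_one_le_left (abs_nonneg _) (by linarith [k.cast_nonneg (α := ℝ)])) (abs_nonneg _)
  simp_rw [goursatH_eq_tsum]
  convert hasDerivAt_tsum_mul_pow_add ha 1 s using 1
  exact tsum_congr fun k => by simp only [Nat.add_sub_cancel]; push_cast; ring

theorem hasDerivAt_deriv_goursatH (s t : ℝ) :
    HasDerivAt (fun t' => deriv (fun s' => goursatH c s' t') s) (-c * goursatH c s t) t := by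
  have hb : ∀ R : ℝ, Summable fun k => |goursatCoeff c k * ((k + 1) * s ^ k)| * R ^ k :=
    summable_abs_mul_pow_of_abs_le (abs_goursatCoeff_mul_le c s)
  have hderiv : (fun t' => deriv (fun s' => goursatH c s' t') s) =
      fun t' => ∑' k, goursatCoeff c k * ((k + 1) * s ^ k) * t' ^ k :=
    funext fun t' => (hasDerivAt_goursatH_fst c s t').deriv
  rw [hderiv]
  refine (hasDerivAt_tsum_mul_pow_add hb 0 t).congr_deriv ?_
  rw [(summable_mul_natCast_mul_pow_sub_one hb 0 t).tsum_eq_zero_add, goursatH_eq_tsum,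
    ← tsum_mul_left]
  simp only [Nat.cast_zero, zero_mul, mul_zero, zero_add]
  refine tsum_congr fun k => ?_
  simp only [Nat.add_zero, Nat.add_sub_cancel]
  push_cast
  linear_combination s ^ (k + 1) * t ^ k * goursatCoeff_succ c k

end Goursat

theorem mul_besselJ1_two_mul (x : ℝ) :
    x * besselJ1 (2 * x) = ∑' k : ℕ, (-1) ^ k * (x ^ 2) ^ (k + 1) / (k ! * (k + 1)!) := by
  rw [besselJ1, ← tsum_mul_left]
  refine tsum_congr fun k => ?_
  have h2 : (2 : ℝ) ^ (2 * k + 1) ≠ 0 := by positivity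
  rw [mul_pow, ← pow_mul]
  field_simp
  ring

theorem goursatH_eq_tsum_div (c s : ℝ) {t : ℝ} (ht : t ≠ 0) :
    goursatH c s t
      = -(∑' k : ℕ, (-1) ^ k * (c * s * t) ^ (k + 1) / (k ! * (k + 1)!)) / (2 * t) := by
  rw [goursatH, neg_div, ← tsum_div_const]
  congr 1
  refine tsum_congr fun k => ?_
  field_simp
  ring

theorem transmutK_add_sub (c s t : ℝ) :
    transmutK c (s + t) (s - t)
      = -(Real.sqrt (c * s * t) * besselJ1 (2 * Real.sqrt (c * s * t))) / (2 * t) := by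
  have hsqrt : Real.sqrt (c * ((s + t) ^ 2 - (s - t) ^ 2)) = 2 * Real.sqrt (c * s * t) := by
    rw [show c * ((s + t) ^ 2 - (s - t) ^ 2) = 2 ^ 2 * (c * s * t) by ring,
      Real.sqrt_mul (by positivity), Real.sqrt_sq zero_le_two]
  rw [transmutK, hsqrt, show s + t - (s - t) = 2 * t by ring]
  ring

theorem goursatH_zero_right (c s : ℝ) : goursatH c s 0 = -(c * s) / 2 := by
  rw [goursatH, tsum_eq_single 0 fun k hk => by simp [zero_pow hk]]
  norm_num
  ring

theorem goursatH_zero_left (c t : ℝ) : goursatH c 0 t = 0 := by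
  simp [goursatH]

theorem goursatH_eq_sqrt_mul_besselJ1 {c s t : ℝ} (ht : t ≠ 0) (hcst : 0 ≤ c * s * t) :
    goursatH c s t
      = -(Real.sqrt (c * s * t) * besselJ1 (2 * Real.sqrt (c * s * t))) / (2 * t) := by
  rw [goursatH_eq_tsum_div c s ht, mul_besselJ1_two_mul, Real.sq_sqrt hcst]

/-- `H(s,t) = K(s+t, s-t) = -√(cst) J₁(2√(cst))/(2t)` solves the Goursat problem
`∂²H/∂s∂t = -cH`, `H(s,0) = -cs/2`, `H(0,t) = 0`. -/
theorem stmt8 (c : ℝ) :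
    (∀ s t : ℝ, t ≠ 0 → 0 ≤ c * s * t →
      transmutK c (s + t) (s - t) = goursatH c s t ∧
      goursatH c s t
        = -(Real.sqrt (c * s * t) * besselJ1 (2 * Real.sqrt (c * s * t))) / (2 * t)) ∧
    (∀ s t : ℝ,
      deriv (fun t' => deriv (fun s' => goursatH c s' t') s) t = -c * goursatH c s t) ∧
    (∀ s : ℝ, goursatH c s 0 = -(c * s) / 2) ∧
    (∀ t : ℝ, goursatH c 0 t = 0) := by
  refine ⟨fun s t ht hcst => ?_, fun s t => (hasDerivAt_deriv_goursatH c s t).deriv,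
    goursatH_zero_right c, goursatH_zero_left c⟩
  have h := goursatH_eq_sqrt_mul_besselJ1 ht hcst
  exact ⟨(transmutK_add_sub c s t).trans h.symm, h⟩
end

section
/- Let K(x,t) be continuous and define for h₁, h₂ ∈ ℂ the kernels K(x,t;h) = h/2 + K(x,t) + (h/2)∫_t^x (K(x,s) - K(x,-s)) ds. Then K(x,t;h) - K(x,-t;h) = K(x,t) - K(x,-t) independently of h, and K(x,t;h₂) = (h₂-h₁)/2 + K(x,t;h₁) + ((h₂-h₁)/2) ∫_t^x (K(x,s;h₁) - K(x,-s;h₁)) ds. -/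
open MeasureTheory

/-- Change-of-parameter identities for the parametrized transmutation kernels
`K(x,t;h) = h/2 + K(x,t) + (h/2)∫ₜˣ (K(x,s) - K(x,-s)) ds`. -/
theorem stmt9 (K : ℝ → ℝ → ℂ)
    (hK : Continuous fun p : ℝ × ℝ => K p.1 p.2)
    (Kh : ℂ → ℝ → ℝ → ℂ)
    (hKh : ∀ h x t, Kh h x t
      = h / 2 + K x t + h / 2 * ∫ s in t..x, (K x s - K x (-s))) :
    (∀ (h : ℂ) (x t : ℝ), Kh h x t - Kh h x (-t) = K x t - K x (-t)) ∧
    (∀ (h₁ h₂ : ℂ) (x t : ℝ),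
      Kh h₂ x t = (h₂ - h₁) / 2 + Kh h₁ x t
        + (h₂ - h₁) / 2 * ∫ s in t..x, (Kh h₁ x s - Kh h₁ x (-s))) := by
  have hcont : ∀ x : ℝ, Continuous fun s : ℝ => K x s - K x (-s) := by
    intro x
    exact (hK.comp (continuous_const.prodMk continuous_id)).sub
      (hK.comp (continuous_const.prodMk continuous_neg))
  have hodd : ∀ (x t : ℝ), (∫ s in (-t)..t, (K x s - K x (-s))) = 0 := by
    intro x t
    have h1 := intervalIntegral.integral_comp_neg (a := -t) (b := t)
      (fun s => K x s - K x (-s))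
    simp only [neg_neg] at h1
    have h2 : (∫ s in (-t)..t, (K x (-s) - K x s))
        = ∫ s in (-t)..t, (K x s - K x (-s)) := h1
    have h3 : (∫ s in (-t)..t, (K x (-s) - K x s))
        = - ∫ s in (-t)..t, (K x s - K x (-s)) := by
      rw [← intervalIntegral.integral_neg]
      congr 1; ext s; ring
    have := h2.symm.trans h3
    linear_combination (this) / 2
  have key : ∀ (h : ℂ) (x t : ℝ), Kh h x t - Kh h x (-t) = K x t - K x (-t) := by
    intro h x t
    rw [hKh, hKh]
    have hsplit : (∫ s in t..(-t), (K x s - K x (-s)))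
        + (∫ s in (-t)..x, (K x s - K x (-s)))
        = ∫ s in t..x, (K x s - K x (-s)) :=
      intervalIntegral.integral_add_adjacent_intervals
        ((hcont x).intervalIntegrable _ _) ((hcont x).intervalIntegrable _ _)
    have hz : (∫ s in t..(-t), (K x s - K x (-s))) = 0 := by
      rw [intervalIntegral.integral_symm, hodd x t, neg_zero]
    rw [hz, zero_add] at hsplit
    rw [← hsplit]
    ring
  refine ⟨key, fun h₁ h₂ x t => ?_⟩
  have hint : (∫ s in t..x, (Kh h₁ x s - Kh h₁ x (-s)))
      = ∫ s in t..x, (K x s - K x (-s)) := by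
    apply intervalIntegral.integral_congr
    intro s _
    exact key h₁ x s
  rw [hint, hKh, hKh]
  ring
end

section
/- Let T_{h₁}, T_{h₂} be the parametrized operators T_h u(x) = u(x) + ∫_{-x}^x K(x,t;h) u(t) dt with kernels as in the previous context. Then for any u ∈ C[-a,a], T_{h₂} u = T_{h₁}[u(x) + ((h₂-h₁)/2) ∫_{-x}^x u(t) dt]. -/
/-!
Write `k = K(x, ·)`, `F(t) = ∫_t^x (k(s) - k(-s)) ds` and `U(t) = ∫_{-t}^t u`. The two sides
differ by `(h₂ - h₁)/2` times `∫_{-x}^x F u - ∫_{-x}^x k U - (h₁/2) ∫_{-x}^x (1 + F) U`.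
The last integral vanishes because `F` is even and `U` is odd. For the first one, symmetrizing `u`
makes `U' = u + u(-·)` appear; integrating by parts (`F(±x) = 0`, `F' = -(k - k(-·))`) and using
once more that `U` is odd turns it into `∫_{-x}^x k U`. Clamping reduces continuity on `[-x, x]`
to continuity on `ℝ`.
-/

open MeasureTheory Set intervalIntegral

theorem Set.uIcc_neg_self (x : ℝ) : uIcc (-x) x = Icc (-|x|) |x| := by
  rcases le_total 0 x with hx | hx
  · rw [abs_of_nonneg hx, uIcc_of_le (by linarith)]
  · rw [abs_of_nonpos hx, uIcc_of_ge (by linarith), neg_neg]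

theorem Set.neg_mem_uIcc_neg_self {x t : ℝ} (ht : t ∈ uIcc (-x) x) : -t ∈ uIcc (-x) x := by
  rw [uIcc_neg_self, mem_Icc] at ht ⊢
  constructor <;> linarith [ht.1, ht.2]

theorem ContinuousOn.exists_continuous_eqOn_Icc {α β : Type*} [LinearOrder α]
    [TopologicalSpace α] [OrderTopology α] [TopologicalSpace β] {f : α → β} {a b : α}
    (hab : a ≤ b) (hf : ContinuousOn f (Icc a b)) :
    ∃ g : α → β, Continuous g ∧ EqOn g f (Icc a b) :=
  ⟨fun s => f (projIcc a b hab s),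
    hf.comp_continuous (continuous_subtype_val.comp continuous_projIcc)
      fun s => (projIcc a b hab s).2,
    fun s hs => by simp only [projIcc_of_mem hab hs]⟩

section SymmetricInterval

variable {E : Type*} [NormedAddCommGroup E] [NormedSpace ℝ E]

theorem integral_neg_self_comp_neg (f : ℝ → E) (x : ℝ) :
    ∫ t in (-x)..x, f (-t) = ∫ t in (-x)..x, f t := by
  rw [integral_comp_neg, neg_neg]

theorem integral_neg_self_of_odd {f : ℝ → E} (hf : ∀ t, f (-t) = -f t) (x : ℝ) :
    ∫ t in (-x)..x, f t = 0 := by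
  have h := integral_neg_self_comp_neg f x
  simp only [hf, intervalIntegral.integral_neg] at h
  have := IsAddTorsionFree.of_isTorsionFree ℝ E
  exact neg_eq_self.1 h

theorem integral_neg_left_of_odd {g : ℝ → E} (hg : ∀ s, g (-s) = -g s) {t x : ℝ}
    (h₁ : IntervalIntegrable g volume (-t) t) (h₂ : IntervalIntegrable g volume t x) :
    ∫ s in (-t)..x, g s = ∫ s in t..x, g s := by
  rw [← integral_add_adjacent_intervals h₁ h₂, integral_neg_self_of_odd hg, zero_add]

theorem integral_neg_neg_self (u : ℝ → E) (t : ℝ) :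
    ∫ s in (-(-t))..(-t), u s = -∫ s in (-t)..t, u s := by
  rw [neg_neg, integral_symm]

theorem hasDerivAt_integral_neg_self [CompleteSpace E] {u : ℝ → E} (hu : Continuous u)
    (t : ℝ) :
    HasDerivAt (fun t => ∫ s in (-t)..t, u s) (u t + u (-t)) t := by
  have hsplit : (fun t => ∫ s in (-t)..t, u s)
      = fun t => (∫ s in (0 : ℝ)..t, u s) - ∫ s in (0 : ℝ)..(-t), u s := by
    funext t
    rw [integral_interval_sub_left (hu.intervalIntegrable _ _) (hu.intervalIntegrable _ _)]
  have hneg := (hu.integral_hasStrictDerivAt 0 (-t)).hasDerivAt.scomp t (hasDerivAt_neg t)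
  rw [hsplit]
  refine ((hu.integral_hasStrictDerivAt 0 t).hasDerivAt.fun_sub hneg).congr_deriv ?_
  simp only [neg_smul, one_smul, sub_neg_eq_add]

theorem integral_neg_left_sub_comp_neg {k : ℝ → E} (hk : Continuous k) (t x : ℝ) :
    ∫ s in (-t)..x, (k s - k (-s)) = ∫ s in t..x, (k s - k (-s)) :=
  integral_neg_left_of_odd (fun s => by rw [neg_neg, neg_sub])
    ((hk.sub (hk.comp continuous_neg)).intervalIntegrable _ _)
    ((hk.sub (hk.comp continuous_neg)).intervalIntegrable _ _)

theorem Continuous.integral_hasDerivAt_left [CompleteSpace E] {g : ℝ → E} (hg : Continuous g)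
    (b t : ℝ) : HasDerivAt (fun t => ∫ s in t..b, g s) (-g t) t :=
  intervalIntegral.integral_hasDerivAt_left (hg.intervalIntegrable _ _)
    (hg.stronglyMeasurableAtFilter _ _) hg.continuousAt

theorem Continuous.integral_left [CompleteSpace E] {g : ℝ → E} (hg : Continuous g) (b : ℝ) :
    Continuous fun t => ∫ s in t..b, g s :=
  continuous_iff_continuousAt.2 fun t => (hg.integral_hasDerivAt_left b t).continuousAt

theorem Continuous.integral_neg_self [CompleteSpace E] {u : ℝ → E} (hu : Continuous u) :
    Continuous fun t => ∫ s in (-t)..t, u s :=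
  continuous_iff_continuousAt.2 fun t => (hasDerivAt_integral_neg_self hu t).continuousAt

end SymmetricInterval

section Transmutation

variable {𝕜 : Type*} [RCLike 𝕜] {k u : ℝ → 𝕜}

/-- The kernel `K(x, t; h)`, with `k = K(x, ·)`. -/
noncomputable def transmutationKernel (k : ℝ → 𝕜) (x : ℝ) (h : 𝕜) (t : ℝ) : 𝕜 :=
  h / 2 + k t + h / 2 * ∫ s in t..x, (k s - k (-s))

theorem integral_primitive_oddPart_mul (hk : Continuous k) (hu : Continuous u) (x : ℝ) :
    ∫ t in (-x)..x, (∫ s in t..x, (k s - k (-s))) * u t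
      = ∫ t in (-x)..x, k t * ∫ s in (-t)..t, u s := by
  set g : ℝ → 𝕜 := fun s => k s - k (-s)
  set F : ℝ → 𝕜 := fun t => ∫ s in t..x, g s
  set U : ℝ → 𝕜 := fun t => ∫ s in (-t)..t, u s
  have hg : Continuous g := by fun_prop
  have hF_even : ∀ t, F (-t) = F t := fun t => integral_neg_left_sub_comp_neg hk t x
  have hF' : ∀ t, HasDerivAt F (-g t) t := hg.integral_hasDerivAt_left x
  have hFc : Continuous F := hg.integral_left x
  have hU_odd : ∀ t, U (-t) = -U t := integral_neg_neg_self u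
  have hU' : ∀ t, HasDerivAt U (u t + u (-t)) t := hasDerivAt_integral_neg_self hu
  have hUc : Continuous U := hu.integral_neg_self
  have hsymm : 2 * ∫ t in (-x)..x, F t * u t = ∫ t in (-x)..x, F t * (u t + u (-t)) := by
    have hflip : ∫ t in (-x)..x, F t * u (-t) = ∫ t in (-x)..x, F t * u t := by
      simpa only [hF_even] using integral_neg_self_comp_neg (fun t => F t * u t) x
    rw [two_mul]
    nth_rw 2 [← hflip]
    simp only [mul_add]
    exact (integral_add ((hFc.mul hu).intervalIntegrable _ _)
      ((hFc.mul (hu.comp continuous_neg)).intervalIntegrable _ _)).symm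
  have hparts : ∫ t in (-x)..x, F t * (u t + u (-t)) = ∫ t in (-x)..x, g t * U t := by
    rw [integral_mul_deriv_eq_deriv_mul (fun t _ => hF' t) (fun t _ => hU' t)
      (hg.neg.intervalIntegrable _ _) ((hu.add (hu.comp continuous_neg)).intervalIntegrable _ _),
      hF_even, show F x = 0 from integral_same]
    simp only [zero_mul, sub_zero, zero_sub, neg_mul, intervalIntegral.integral_neg, neg_neg]
  have hodd : ∫ t in (-x)..x, g t * U t = 2 * ∫ t in (-x)..x, k t * U t := by
    have hflip : ∫ t in (-x)..x, k (-t) * U t = -∫ t in (-x)..x, k t * U t := by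
      rw [← intervalIntegral.integral_neg, ← integral_neg_self_comp_neg]
      simp only [neg_neg, hU_odd, mul_neg]
    simp only [g, sub_mul]
    rw [intervalIntegral.integral_sub
      ((by fun_prop : Continuous fun t => k t * U t).intervalIntegrable _ _)
      ((by fun_prop : Continuous fun t => k (-t) * U t).intervalIntegrable _ _), hflip]
    ring
  have hcore : ∫ t in (-x)..x, F t * u t = ∫ t in (-x)..x, k t * U t := by
    linear_combination (hsymm.trans (hparts.trans hodd)) / 2
  exact hcore

theorem transmutation_shift_of_continuous (hk : Continuous k) (hu : Continuous u) (x : ℝ)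
    (h₁ h₂ : 𝕜) :
    u x + ∫ t in (-x)..x, transmutationKernel k x h₂ t * u t
      = (u x + (h₂ - h₁) / 2 * ∫ t in (-x)..x, u t)
        + ∫ t in (-x)..x, transmutationKernel k x h₁ t
            * (u t + (h₂ - h₁) / 2 * ∫ s in (-t)..t, u s) := by
  unfold transmutationKernel
  have hcore := integral_primitive_oddPart_mul hk hu x
  set F : ℝ → 𝕜 := fun t => ∫ s in t..x, (k s - k (-s))
  set U : ℝ → 𝕜 := fun t => ∫ s in (-t)..t, u s
  set δ := (h₂ - h₁) / 2
  have hF : Continuous F := (hk.sub (hk.comp continuous_neg)).integral_left x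
  have hU : Continuous U := hu.integral_neg_self
  have hFU : ∫ t in (-x)..x, (1 + F t) * U t = 0 := by
    refine integral_neg_self_of_odd (fun t => ?_) x
    simp only [F, U, integral_neg_left_sub_comp_neg hk, integral_neg_neg_self, mul_neg]
  have hdiff : (∫ t in (-x)..x, (h₂ / 2 + k t + h₂ / 2 * F t) * u t)
        - ∫ t in (-x)..x, (h₁ / 2 + k t + h₁ / 2 * F t) * (u t + δ * U t)
      = ∫ t in (-x)..x, (δ * (u t + F t * u t) - δ * (k t * U t)
          - δ * (h₁ / 2) * ((1 + F t) * U t)) := by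
    rw [← intervalIntegral.integral_sub ((by fun_prop : Continuous _).intervalIntegrable _ _)
      ((by fun_prop : Continuous _).intervalIntegrable _ _)]
    refine integral_congr fun t _ => ?_
    simp only [δ]
    ring
  have hsplit : ∫ t in (-x)..x, (δ * (u t + F t * u t) - δ * (k t * U t)
      - δ * (h₁ / 2) * ((1 + F t) * U t)) = δ * ∫ t in (-x)..x, u t := by
    rw [intervalIntegral.integral_sub, intervalIntegral.integral_sub,
      intervalIntegral.integral_const_mul, intervalIntegral.integral_const_mul,
      intervalIntegral.integral_const_mul, intervalIntegral.integral_add, hcore, hFU]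
    · ring
    all_goals exact (by fun_prop : Continuous _).intervalIntegrable _ _
  linear_combination hdiff.trans hsplit

theorem transmutationKernel_congr {k' : ℝ → 𝕜} {x : ℝ} (hkk' : EqOn k k' (uIcc (-x) x))
    (h : 𝕜) : EqOn (transmutationKernel k x h) (transmutationKernel k' x h) (uIcc (-x) x) := by
  intro t ht
  have hint : ∫ s in t..x, (k s - k (-s)) = ∫ s in t..x, (k' s - k' (-s)) := by
    refine integral_congr fun s hs => ?_
    have hs' : s ∈ uIcc (-x) x := uIcc_subset_uIcc ht right_mem_uIcc hs
    rw [hkk' hs', hkk' (neg_mem_uIcc_neg_self hs')]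
  rw [transmutationKernel, transmutationKernel, hkk' ht, hint]

theorem transmutation_shift {x : ℝ} (hk : ContinuousOn k (uIcc (-x) x))
    (hu : ContinuousOn u (uIcc (-x) x)) (h₁ h₂ : 𝕜) :
    u x + ∫ t in (-x)..x, transmutationKernel k x h₂ t * u t
      = (u x + (h₂ - h₁) / 2 * ∫ t in (-x)..x, u t)
        + ∫ t in (-x)..x, transmutationKernel k x h₁ t
            * (u t + (h₂ - h₁) / 2 * ∫ s in (-t)..t, u s) := by
  obtain ⟨k', hk', hkk'⟩ := hk.exists_continuous_eqOn_Icc inf_le_sup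
  obtain ⟨u', hu', huu'⟩ := hu.exists_continuous_eqOn_Icc inf_le_sup
  have hK := transmutationKernel_congr hkk'.symm
  have hU : ∀ t ∈ uIcc (-x) x, ∫ s in (-t)..t, u s = ∫ s in (-t)..t, u' s := fun t ht =>
    integral_congr fun s hs =>
      (huu' (uIcc_subset_uIcc (neg_mem_uIcc_neg_self ht) ht hs)).symm
  have hL : ∫ t in (-x)..x, transmutationKernel k x h₂ t * u t
      = ∫ t in (-x)..x, transmutationKernel k' x h₂ t * u' t :=
    integral_congr fun t ht => by simp only [hK h₂ ht, huu' ht]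
  have hR : ∫ t in (-x)..x, transmutationKernel k x h₁ t
        * (u t + (h₂ - h₁) / 2 * ∫ s in (-t)..t, u s)
      = ∫ t in (-x)..x, transmutationKernel k' x h₁ t
        * (u' t + (h₂ - h₁) / 2 * ∫ s in (-t)..t, u' s) :=
    integral_congr fun t ht => by simp only [hK h₁ ht, huu' ht, hU t ht]
  rw [hL, hR, hU x right_mem_uIcc, ← huu' right_mem_uIcc]
  exact transmutation_shift_of_continuous hk' hu' x h₁ h₂

end Transmutation

theorem stmt11_general (a : ℝ) (K : ℝ → ℝ → ℂ)
    (hK : ContinuousOn (fun p : ℝ × ℝ => K p.1 p.2)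
      {p : ℝ × ℝ | |p.2| ≤ |p.1| ∧ |p.1| ≤ a})
    (Kh : ℂ → ℝ → ℝ → ℂ)
    (hKh : ∀ h x t, Kh h x t
      = h / 2 + K x t + h / 2 * ∫ s in t..x, (K x s - K x (-s)))
    (Th : ℂ → (ℝ → ℂ) → ℝ → ℂ)
    (hTh : ∀ h u x, Th h u x = u x + ∫ t in (-x)..x, Kh h x t * u t)
    (h₁ h₂ : ℂ) :
    ∀ u : ℝ → ℂ, ContinuousOn u (Set.Icc (-a) a) → ∀ x ∈ Set.Icc (-a) a,
      Th h₂ u x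
        = Th h₁ (fun y => u y + (h₂ - h₁) / 2 * ∫ t in (-y)..y, u t) x := by
  intro u hu x hx
  have hxa : |x| ≤ a := abs_le.2 hx
  have hKx : ContinuousOn (K x) (uIcc (-x) x) :=
    hK.comp (by fun_prop : Continuous fun s => (x, s)).continuousOn fun s hs =>
      ⟨by rw [uIcc_neg_self] at hs; exact abs_le.2 hs, hxa⟩
  have hux : ContinuousOn u (uIcc (-x) x) :=
    hu.mono (by rw [uIcc_neg_self]; exact Icc_subset_Icc (neg_le_neg hxa) hxa)
  have hKh' : ∀ h t, Kh h x t = transmutationKernel (K x) x h t := fun h t => hKh h x t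
  simp only [hTh, hKh']
  exact transmutation_shift hKx hux h₁ h₂

/-- Relation between the parametrized transmutation operators:
`T_{h₂} u = T_{h₁}[u + ((h₂-h₁)/2)∫_{-x}^x u]`. -/
theorem stmt11 (a : ℝ) (ha : 0 < a) (K : ℝ → ℝ → ℂ)
    (hK : ContinuousOn (fun p : ℝ × ℝ => K p.1 p.2)
      {p : ℝ × ℝ | |p.2| ≤ |p.1| ∧ |p.1| ≤ a})
    (Kh : ℂ → ℝ → ℝ → ℂ)
    (hKh : ∀ h x t, Kh h x t
      = h / 2 + K x t + h / 2 * ∫ s in t..x, (K x s - K x (-s)))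
    (Th : ℂ → (ℝ → ℂ) → ℝ → ℂ)
    (hTh : ∀ h u x, Th h u x = u x + ∫ t in (-x)..x, Kh h x t * u t)
    (h₁ h₂ : ℂ) :
    ∀ u : ℝ → ℂ, ContinuousOn u (Set.Icc (-a) a) → ∀ x ∈ Set.Icc (-a) a,
      Th h₂ u x
        = Th h₁ (fun y => u y + (h₂ - h₁) / 2 * ∫ t in (-y)..y, u t) x :=
  stmt11_general a K hK Kh hKh Th hTh h₁ h₂
end

section
/- Let f ∈ C¹[-a,a] be nonvanishing with f(0) = 1, and suppose operators T₁, T₂ satisfy ∂ₓ (1/f) T₁ = (1/f) T₂ ∂ₓ and ∂ₓ f T₂ = f T₁ ∂ₓ on sufficiently smooth functions. Define generalized derivatives γ₀(g) = g, γ_k(g) = (f²)^{(-1)^{k-1}} (γ_{k-1}(g))'. Then for u ∈ Cⁿ[-a,a] and g = (1/f) T₁ u one has γ_k(g) = f·T₂[u^{(k)}] for odd k ≤ n and γ_k(g) = (1/f)·T₁[u^{(k)}] for even k ≤ n. -/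
/-- Generalized derivatives and transmutations: for `g = (1/f) T₁ u` one has
`γ_k(g) = f T₂ u⁽ᵏ⁾` for odd `k ≤ n` and `γ_k(g) = (1/f) T₁ u⁽ᵏ⁾` for even `k ≤ n`,
where `γ₀(g) = g` and `γ_k(g) = (f²)^{(-1)^{k-1}} (γ_{k-1}(g))'`. -/
theorem stmt19 (a : ℝ) (ha : 0 < a) (n : ℕ)
    (f : ℝ → ℂ)
    (hfne : ∀ x ∈ Set.Icc (-a) a, f x ≠ 0) (hf0 : f 0 = 1)
    (T₁ T₂ : (ℝ → ℂ) → ℝ → ℂ)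
    (hcomm1 : ∀ w w' : ℝ → ℂ,
      (∀ x ∈ Set.Icc (-a) a, HasDerivWithinAt w (w' x) (Set.Icc (-a) a) x) →
      ∀ x ∈ Set.Icc (-a) a,
        HasDerivWithinAt (fun y => (f y)⁻¹ * T₁ w y) ((f x)⁻¹ * T₂ w' x)
          (Set.Icc (-a) a) x)
    (hcomm2 : ∀ w w' : ℝ → ℂ,
      (∀ x ∈ Set.Icc (-a) a, HasDerivWithinAt w (w' x) (Set.Icc (-a) a) x) →
      ∀ x ∈ Set.Icc (-a) a,
        HasDerivWithinAt (fun y => f y * T₂ w y) (f x * T₁ w' x)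
          (Set.Icc (-a) a) x)
    (U : ℕ → ℝ → ℂ)
    (hU : ∀ k < n, ∀ x ∈ Set.Icc (-a) a,
      HasDerivWithinAt (U k) (U (k + 1) x) (Set.Icc (-a) a) x)
    (G Gd : ℕ → ℝ → ℂ)
    (hG0 : ∀ x, G 0 x = (f x)⁻¹ * T₁ (U 0) x)
    (hGd : ∀ k < n, ∀ x ∈ Set.Icc (-a) a,
      HasDerivWithinAt (G k) (Gd k x) (Set.Icc (-a) a) x)
    (hGrec : ∀ k x, G (k + 1) x = ((f x) ^ 2) ^ ((-1 : ℤ) ^ k) * Gd k x) :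
    ∀ k ≤ n, ∀ x ∈ Set.Icc (-a) a,
      (Odd k → G k x = f x * T₂ (U k) x) ∧
      (Even k → G k x = (f x)⁻¹ * T₁ (U k) x) := by
  have hud : UniqueDiffOn ℝ (Set.Icc (-a) a) := uniqueDiffOn_Icc (by linarith)
  intro k
  induction k with
  | zero =>
    intro _ x hx
    exact ⟨fun h => absurd h (by simp), fun _ => hG0 x⟩
  | succ k ih =>
    intro hk x hx
    have hkn : k < n := hk
    have ihk := ih (le_of_lt hkn)
    have hfx := hfne x hx
    rcases Nat.even_or_odd k with hke | hko
    · have hG : ∀ y ∈ Set.Icc (-a) a, G k y = (f y)⁻¹ * T₁ (U k) y :=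
        fun y hy => (ihk y hy).2 hke
      have hd := hcomm1 (U k) (U (k + 1)) (hU k hkn) x hx
      have hd' : HasDerivWithinAt (G k) ((f x)⁻¹ * T₂ (U (k + 1)) x) (Set.Icc (-a) a) x :=
        hd.congr hG (hG x hx)
      have heq : Gd k x = (f x)⁻¹ * T₂ (U (k + 1)) x :=
        (hud x hx).eq_deriv _ (hGd k hkn x hx) hd'
      constructor
      · intro _
        rw [hGrec, heq, hke.neg_one_pow, zpow_one]
        field_simp
      · intro h
        exact absurd hke (Nat.even_add_one.mp h)
    · have hG : ∀ y ∈ Set.Icc (-a) a, G k y = f y * T₂ (U k) y :=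
        fun y hy => (ihk y hy).1 hko
      have hd := hcomm2 (U k) (U (k + 1)) (hU k hkn) x hx
      have hd' : HasDerivWithinAt (G k) (f x * T₁ (U (k + 1)) x) (Set.Icc (-a) a) x :=
        hd.congr hG (hG x hx)
      have heq : Gd k x = f x * T₁ (U (k + 1)) x :=
        (hud x hx).eq_deriv _ (hGd k hkn x hx) hd'
      constructor
      · intro h
        exact absurd hko (Nat.odd_add_one.mp h)
      · intro _
        rw [hGrec, heq, hko.neg_one_pow, zpow_neg_one]
        field_simp
end
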